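/- arXiv:2304.05480 — 10 statements merged into one kernel-verified Lean document; each statement's English description precedes it below -/
import Mathlib

section
/- Let L be an even lattice and h ∈ L a primitive vector with h² ≠ 0. Every isometry g of h^⊥ acting trivially on the discriminant group A_{h^⊥} extends to an isometry of L that fixes h and acts trivially on A_L. This defines an injective group homomorphism from the stable orthogonal group Õ(h^⊥) to Õ(L, h). -/
/-- The dual lattice of a `ℤ`-lattice `N` inside the `ℚ`-subspace `W` of `V`, with respect
to the bilinear form `B`: rational vectors of `W` pairing integrally with `N`. -/
def dualIn {V : Type*} [AddCommGroup V] [Module ℚ V]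
    (B : LinearMap.BilinForm ℚ V) (W : Submodule ℚ V) (N : Submodule ℤ V) :
    Submodule ℤ V where
  carrier := {x | x ∈ W ∧ ∀ y ∈ N, ∃ n : ℤ, B x y = n}
  zero_mem' := ⟨W.zero_mem, fun y _ => ⟨0, by simp⟩⟩
  add_mem' := by
    rintro a b ⟨haW, ha⟩ ⟨hbW, hb⟩
    refine ⟨W.add_mem haW hbW, fun y hy => ?_⟩
    obtain ⟨n, hn⟩ := ha y hy
    obtain ⟨m, hm⟩ := hb y hy
    exact ⟨n + m, by rw [map_add, LinearMap.add_apply, hn, hm]; push_cast; ring⟩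
  smul_mem' := by
    rintro z x ⟨hxW, hx⟩
    refine ⟨(W.restrictScalars ℤ).smul_mem z hxW, fun y hy => ?_⟩
    obtain ⟨n, hn⟩ := hx y hy
    refine ⟨z * n, ?_⟩
    rw [map_zsmul, LinearMap.smul_apply, hn, zsmul_eq_mul]
    push_cast
    ring

/-!
STATEMENT 4. Let `L` be an even lattice (inside the `ℚ`-vector space `V`, with symmetric
nondegenerate bilinear form `B`, integral and even on `L`) and `h ∈ L` primitive with
`h² ≠ 0`.  Every isometry `g` of `h^⊥` acting trivially on the discriminant group
`A_{h^⊥}` (i.e. `g x - x ∈ h^⊥` for every `x` in the dual lattice of `h^⊥`) extends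
uniquely to an isometry `G` of `L` fixing `h` and acting trivially on `A_L`.  Existence
plus uniqueness of the extension expresses that `Õ(h^⊥) → Õ(L, h)`, `g ↦ G`, is a
well-defined injective group homomorphism (restriction being a left inverse).
-/
theorem stmt_4 {V : Type*} [AddCommGroup V] [Module ℚ V] [FiniteDimensional ℚ V]
    (B : LinearMap.BilinForm ℚ V) (hsymm : ∀ x y, B x y = B y x)
    (hnd : B.Nondegenerate)
    (L : Submodule ℤ V) [Module.Finite ℤ L] [Module.Free ℤ L]
    (hspan : Submodule.span ℚ (L : Set V) = ⊤)
    (hint : ∀ x ∈ L, ∀ y ∈ L, ∃ n : ℤ, B x y = n)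
    (heven : ∀ x ∈ L, ∃ n : ℤ, B x x = 2 * n)
    (h : V) (hh : h ∈ L)
    (hhprim : ∀ (n : ℤ) (v : V), v ∈ L → h = n • v → IsUnit n)
    (hh2 : B h h ≠ 0)
    (Vh : Submodule ℚ V) (hVh : Vh = LinearMap.ker (B.flip h))
    (Lperp : Submodule ℤ V) (hLperp : Lperp = L ⊓ Vh.restrictScalars ℤ)
    (g : V →ₗ[ℚ] V)
    (hgiso : ∀ x y : V, B x h = 0 → B y h = 0 → B (g x) (g y) = B x y)
    (hgL : Submodule.map (g.restrictScalars ℤ) Lperp = Lperp)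
    (hgdisc : ∀ x ∈ dualIn B Vh Lperp, g x - x ∈ Lperp) :
    ∃! G : V →ₗ[ℚ] V, G h = h ∧ (∀ x : V, B x h = 0 → G x = g x) ∧
      (∀ x y : V, B (G x) (G y) = B x y) ∧
      Submodule.map (G.restrictScalars ℤ) L = L ∧
      ∀ x ∈ dualIn B ⊤ L, G x - x ∈ L := by
  classical
  -- basic membership facts
  have hVhiff : ∀ v : V, v ∈ Vh ↔ B v h = 0 := by
    intro v; rw [hVh, LinearMap.mem_ker]; exact Iff.rfl
  have hLperpL : ∀ z ∈ Lperp, z ∈ L := by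
    intro z hz; rw [hLperp] at hz; exact hz.1
  have hLperpVh : ∀ z ∈ Lperp, B z h = 0 := by
    intro z hz; rw [hLperp] at hz
    exact (hVhiff z).1 hz.2
  have hmemLperp : ∀ z : V, z ∈ L → B z h = 0 → z ∈ Lperp := by
    intro z h1 h2; rw [hLperp]
    exact ⟨h1, (hVhiff z).2 h2⟩
  have hgmem : ∀ z ∈ Lperp, g z ∈ Lperp := by
    intro z hz; rw [← hgL]; exact ⟨z, hz, rfl⟩
  have hgsurj : ∀ t ∈ Lperp, ∃ w ∈ Lperp, g w = t := by
    intro t ht; rw [← hgL] at ht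
    obtain ⟨w, hw, hwt⟩ := ht; exact ⟨w, hw, hwt⟩
  -- clearing denominators
  have hclear : ∀ v : V, ∃ n : ℤ, n ≠ 0 ∧ (n : ℚ) • v ∈ L := by
    intro v
    have hv : v ∈ Submodule.span ℚ (L : Set V) := by rw [hspan]; trivial
    induction hv using Submodule.span_induction with
    | mem x hx => exact ⟨1, one_ne_zero, by simpa using hx⟩
    | zero => exact ⟨1, one_ne_zero, by simpa using L.zero_mem⟩
    | add x y _ _ ihx ihy =>
        obtain ⟨n, hn, hnx⟩ := ihx
        obtain ⟨m, hm, hmy⟩ := ihy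
        refine ⟨n * m, mul_ne_zero hn hm, ?_⟩
        have e : ((n * m : ℤ) : ℚ) • (x + y)
            = (m : ℤ) • ((n : ℚ) • x) + (n : ℤ) • ((m : ℚ) • y) := by
          simp only [Int.cast_smul_eq_zsmul ℚ]
          rw [smul_smul, smul_smul, smul_add, mul_comm m n]
        rw [e]
        exact L.add_mem (L.smul_mem m hnx) (L.smul_mem n hmy)
    | smul q x _ ih =>
        obtain ⟨n, hn, hnx⟩ := ih
        refine ⟨(q.den : ℤ) * n, mul_ne_zero (by exact_mod_cast q.den_ne_zero) hn, ?_⟩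
        have e : (((q.den : ℤ) * n : ℤ) : ℚ) • (q • x) = q.num • ((n : ℚ) • x) := by
          rw [← Int.cast_smul_eq_zsmul ℚ q.num, smul_smul, smul_smul]
          congr 1
          push_cast
          linear_combination (n : ℚ) * Rat.mul_den_eq_num q
        rw [e]
        exact L.smul_mem _ hnx
  -- g preserves Vh
  have hgVh : ∀ v : V, B v h = 0 → B (g v) h = 0 := by
    intro v hv
    obtain ⟨n, hn, hnv⟩ := hclear v
    have hnvp : (n : ℚ) • v ∈ Lperp :=
      hmemLperp _ hnv (by rw [map_smul, LinearMap.smul_apply, hv, smul_zero])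
    have h0 : B (g ((n : ℚ) • v)) h = 0 := hLperpVh _ (hgmem _ hnvp)
    rw [map_smul, map_smul, LinearMap.smul_apply, smul_eq_mul] at h0
    rcases mul_eq_zero.1 h0 with h1 | h1
    · exact absurd (by exact_mod_cast h1) hn
    · exact h1
  -- the projection onto ℚ•h
  set P : V →ₗ[ℚ] V := (B h h)⁻¹ • (LinearMap.smulRight (B.flip h) h) with hP
  have hPapp : ∀ x : V, P x = (B x h / B h h) • h := by
    intro x
    simp only [hP, LinearMap.smul_apply, LinearMap.smulRight_apply,
      smul_smul, div_eq_inv_mul]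
    rfl
  have hPh : P h = h := by rw [hPapp, div_self hh2, one_smul]
  have hP0 : ∀ x : V, B x h = 0 → P x = 0 := by
    intro x hx; rw [hPapp, hx, zero_div, zero_smul]
  have hvperp : ∀ x : V, B (x - P x) h = 0 := by
    intro x
    rw [hPapp, map_sub, LinearMap.sub_apply, map_smul, LinearMap.smul_apply, smul_eq_mul,
      div_mul_cancel₀ _ hh2, sub_self]
  have hPform : ∀ x : V, ∃ c : ℚ, P x = c • h := fun x => ⟨_, hPapp x⟩
  -- orthogonal splitting of B
  have bsplit : ∀ (u w p q : V), (∃ c : ℚ, p = c • h) → (∃ d : ℚ, q = d • h) →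
      B u h = 0 → B w h = 0 → B (p + u) (q + w) = B p q + B u w := by
    rintro u w _ _ ⟨c, rfl⟩ ⟨d, rfl⟩ hu hw
    have h1 : B h w = 0 := (hsymm h w).trans hw
    simp only [map_add, map_smul, LinearMap.add_apply, LinearMap.smul_apply, smul_eq_mul, hu, h1]
    ring
  -- the extension
  set G : V →ₗ[ℚ] V := P + g ∘ₗ (LinearMap.id - P) with hGdef
  have hGapp : ∀ x : V, G x = P x + g (x - P x) := fun x => rfl
  have prop1 : G h = h := by rw [hGapp, hPh, sub_self, map_zero, add_zero]
  have prop2 : ∀ x : V, B x h = 0 → G x = g x := by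
    intro x hx
    rw [hGapp, hP0 x hx, sub_zero, zero_add]
  have prop3 : ∀ x y : V, B (G x) (G y) = B x y := by
    intro x y
    calc B (G x) (G y)
        = B (P x) (P y) + B (g (x - P x)) (g (y - P y)) :=
          bsplit _ _ _ _ (hPform x) (hPform y) (hgVh _ (hvperp x)) (hgVh _ (hvperp y))
      _ = B (P x) (P y) + B (x - P x) (y - P y) := by
          rw [hgiso _ _ (hvperp x) (hvperp y)]
      _ = B (P x + (x - P x)) (P y + (y - P y)) :=
          (bsplit _ _ _ _ (hPform x) (hPform y) (hvperp x) (hvperp y)).symm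
      _ = B x y := by
          rw [show P x + (x - P x) = x from by abel, show P y + (y - P y) = y from by abel]
  -- the key discriminant fact
  have hvdual : ∀ x : V, (∀ y ∈ L, ∃ m : ℤ, B x y = m) →
      g (x - P x) - (x - P x) ∈ Lperp := by
    intro x hx
    apply hgdisc
    refine ⟨(hVhiff _).2 (hvperp x), ?_⟩
    intro y hy
    obtain ⟨m, hm⟩ := hx y (hLperpL y hy)
    refine ⟨m, ?_⟩
    have h0 : B h y = 0 := (hsymm h y).trans (hLperpVh y hy)
    rw [map_sub, LinearMap.sub_apply, hm, hPapp, map_smul, LinearMap.smul_apply, h0, smul_zero,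
      sub_zero]
  have hGshift : ∀ x : V, G x = x + (g (x - P x) - (x - P x)) := by
    intro x; rw [hGapp]; abel
  have prop4 : Submodule.map (G.restrictScalars ℤ) L = L := by
    apply le_antisymm
    · rintro _ ⟨x, hx, rfl⟩
      show G x ∈ L
      rw [hGshift]
      exact L.add_mem hx (hLperpL _ (hvdual x (fun y hy => hint x hx y hy)))
    · intro y hy
      have ht := hvdual y (fun z hz => hint y hy z hz)
      obtain ⟨w, hw, hgw⟩ := hgsurj _ ht
      refine ⟨y - w, L.sub_mem hy (hLperpL _ hw), ?_⟩
      show G (y - w) = y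
      rw [map_sub, prop2 w (hLperpVh w hw), hgw, hGshift]
      abel
  have prop5 : ∀ x ∈ dualIn B ⊤ L, G x - x ∈ L := by
    intro x hx
    have := hvdual x hx.2
    have e : G x - x = g (x - P x) - (x - P x) := by rw [hGshift]; abel
    rw [e]
    exact hLperpL _ this
  refine ⟨G, ⟨prop1, prop2, prop3, prop4, prop5⟩, ?_⟩
  rintro G' ⟨h1, h2, -, -, -⟩
  ext x
  have e : G' x = G' (P x) + G' (x - P x) := by rw [← map_add]; congr 1; abel
  rw [e, h2 _ (hvperp x), hPapp, map_smul, h1, ← hPapp, ← hGapp]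
end

section
/- Let L_{2t} = M ⊕ U ⊕ Zℓ, where M is an even unimodular lattice, U the hyperbolic plane with basis e, f (e²=f²=0, e·f=1), and ℓ² = −2t with t > 0. Let h ∈ L_{2t} be a primitive vector of square 2d > 0 and divisibility γ. Then γ divides 2t, and γ² divides d + tc² for some integer c with 0 ≤ c < γ and gcd(c, γ) = 1. -/
/-!
Since `gcd(a, c₀) = 1`, the divisibility is `γ = gcd(a, 2t)`, which divides `2t` and is prime to
`c₀`. Take `c = c₀ mod γ`: then `c` is prime to `γ`, and
`d + t c² = a² (m2 / 2) + t (c² - c₀²)`, where `γ² ∣ a²` and `γ² ∣ t (c² - c₀²)` because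
`c ≡ c₀ (mod γ)` and `γ ∣ 2 t c₀`.
-/

theorem Int.gcd_mul_right_eq_of_isCoprime {a c : ℤ} (h : IsCoprime a c) (b : ℤ) :
    Int.gcd a (b * c) = Int.gcd a b := by
  have hc : Nat.Coprime c.natAbs a.natAbs := Int.isCoprime_iff_gcd_eq_one.mp h.symm
  simpa only [Int.gcd, Int.natAbs_mul] using hc.gcd_mul_right_cancel_right b.natAbs

theorem sq_dvd_mul_sq_sub_sq {R : Type*} [CommRing R] {g t x y : R}
    (hty : g ∣ 2 * t * y) (hxy : g ∣ x - y) : g ^ 2 ∣ t * (x ^ 2 - y ^ 2) := by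
  obtain ⟨k, hk⟩ := hxy
  obtain ⟨l, hl⟩ := hty
  exact ⟨k * l + t * k ^ 2, by linear_combination t * (x + y + g * k) * hk + g * k * hl⟩

theorem stmt_5_general (t d a c₀ m2 : ℤ) (ht : 0 < t)
    (hprim : IsCoprime a c₀) (heven : 2 ∣ m2)
    (hsquare : 2 * d = a ^ 2 * m2 - 2 * t * c₀ ^ 2)
    (γ : ℤ) (hγ : γ = Int.gcd a (2 * t * c₀)) :
    γ ∣ 2 * t ∧
      ∃ c : ℤ, 0 ≤ c ∧ c < γ ∧ Int.gcd c γ = 1 ∧ γ ^ 2 ∣ d + t * c ^ 2 := by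
  rw [Int.gcd_mul_right_eq_of_isCoprime hprim] at hγ
  have hγa : γ ∣ a := hγ ▸ Int.gcd_dvd_left _ _
  have hγ2t : γ ∣ 2 * t := hγ ▸ Int.gcd_dvd_right _ _
  have hγpos : 0 < γ := hγ ▸ Int.natCast_pos.mpr (Int.gcd_pos_iff.mpr (Or.inr (by positivity)))
  have hγc₀ : IsCoprime γ c₀ := hprim.of_isCoprime_of_dvd_left hγa
  obtain ⟨m, rfl⟩ := heven
  refine ⟨hγ2t, c₀ % γ, Int.emod_nonneg _ hγpos.ne', Int.emod_lt_of_pos _ hγpos, ?_, ?_⟩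
  · rw [Int.gcd_emod, Int.gcd_comm]
    exact Int.isCoprime_iff_gcd_eq_one.mp hγc₀
  · have hsplit : d + t * (c₀ % γ) ^ 2 = a ^ 2 * m + t * ((c₀ % γ) ^ 2 - c₀ ^ 2) := by linarith
    rw [hsplit]
    exact ((pow_dvd_pow_of_dvd hγa 2).mul_right m).add
      (sq_dvd_mul_sq_sub_sq (dvd_mul_of_dvd_left hγ2t c₀) Int.dvd_emod_sub_self)

theorem stmt_5 (t d a c₀ m2 : ℤ) (ht : 0 < t) (hd : 0 < d)
    (hprim : IsCoprime a c₀) (heven : 2 ∣ m2)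
    (hsquare : 2 * d = a ^ 2 * m2 - 2 * t * c₀ ^ 2)
    (γ : ℤ) (hγ : γ = Int.gcd a (2 * t * c₀)) :
    γ ∣ 2 * t ∧
      ∃ c : ℤ, 0 ≤ c ∧ c < γ ∧ Int.gcd c γ = 1 ∧ γ ^ 2 ∣ d + t * c ^ 2 :=
  stmt_5_general t d a c₀ m2 ht hprim heven hsquare γ hγ
end

section
/- Let L_{2t} = M ⊕ U ⊕ Zℓ with M even unimodular and ℓ² = −2t, and let h = γ(e + bf) + cℓ be a primitive vector of square 2d > 0 and divisibility γ, with 0 ≤ c < γ, gcd(c,γ) = 1. Then h^⊥ is isomorphic to the orthogonal direct sum of M with the rank-2 lattice with Gram matrix [[−(2d + 2c²t)/γ², 2tc/γ], [2tc/γ, −2t]], with basis h₁ = e − bf and h₂ = (2tc/γ)f + ℓ for the rank-2 part. -/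
/-!
STATEMENT 7. `L_{2t} = M ⊕ U ⊕ ℤℓ`, modeled as `(Fin r ⊕ Fin 3) → ℤ` with Gram matrix the
block sum of an even unimodular `GM` and `!![0,1,0; 1,0,0; 0,0,-2t]` (basis `e, f, ℓ`).
Let `h = γ(e + bf) + cℓ` be primitive of square `2d > 0` and divisibility `γ` (so
`0 ≤ c < γ`, `gcd(c, γ) = 1`, `γ ∣ 2t`, `2d = 2γ²b - 2tc²`).  Then `h^⊥` is the direct
sum of `M` and the rank-2 lattice with basis `h₁ = e - bf`, `h₂ = (2tc/γ)f + ℓ` and Gram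
matrix `[[-(2d + 2c²t)/γ², 2tc/γ], [2tc/γ, -2t]]`.
-/
theorem stmt_7 (r : ℕ) (t d : ℤ) (ht : 0 < t) (hd : 0 < d)
    (GM : Matrix (Fin r) (Fin r) ℤ) (hsymm : GM.IsSymm) (heven : ∀ i, 2 ∣ GM i i)
    (hunimod : IsUnit GM.det)
    (B : LinearMap.BilinForm ℤ ((Fin r ⊕ Fin 3) → ℤ))
    (hB : B = Matrix.toBilin'
      (Matrix.fromBlocks GM 0 0 !![0, 1, 0; 1, 0, 0; 0, 0, -(2 * t)]))
    (γ b c : ℤ) (hc0 : 0 ≤ c) (hcγ : c < γ) (hcop : Int.gcd c γ = 1)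
    (hγ2t : γ ∣ 2 * t) (hsq : 2 * d = 2 * γ ^ 2 * b - 2 * t * c ^ 2)
    (c2 : ℤ) (hc2 : γ * c2 = 2 * t * c)
    (h h₁ h₂ : (Fin r ⊕ Fin 3) → ℤ)
    (hh : h = Sum.elim (0 : Fin r → ℤ) ![γ, γ * b, c])
    (hh₁ : h₁ = Sum.elim (0 : Fin r → ℤ) ![1, -b, 0])
    (hh₂ : h₂ = Sum.elim (0 : Fin r → ℤ) ![0, c2, 1])
    (Msub : Submodule ℤ ((Fin r ⊕ Fin 3) → ℤ))
    (hMsub : Msub = ⨅ j : Fin 3,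
      LinearMap.ker (LinearMap.proj (R := ℤ) (φ := fun _ : Fin r ⊕ Fin 3 => ℤ)
        (Sum.inr j))) :
    h₁ ∈ LinearMap.ker (B h) ∧ h₂ ∈ LinearMap.ker (B h) ∧
      γ ^ 2 * B h₁ h₁ = -(2 * d + 2 * c ^ 2 * t) ∧
      γ * B h₁ h₂ = 2 * t * c ∧ B h₂ h₂ = -(2 * t) ∧
      LinearMap.ker (B h) = Msub ⊔ Submodule.span ℤ {h₁, h₂} := by
  have hγ : (0:ℤ) < γ := lt_of_le_of_lt hc0 hcγ
  have key : ∀ x : (Fin r ⊕ Fin 3) → ℤ, B h x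
      = γ * b * x (Sum.inr 0) + γ * x (Sum.inr 1) + (-(2*t)*c) * x (Sum.inr 2) := by
    intro x
    rw [hB, hh, Matrix.toBilin'_apply]
    simp [Fintype.sum_sum_type, Fin.sum_univ_three, Matrix.fromBlocks, Matrix.vecHead, Matrix.vecTail]
    ring
  have hm₁ : h₁ ∈ LinearMap.ker (B h) := by
    rw [LinearMap.mem_ker, key, hh₁]; simp [Matrix.vecHead, Matrix.vecTail]
  have hm₂ : h₂ ∈ LinearMap.ker (B h) := by
    rw [LinearMap.mem_ker, key, hh₂]; simp [Matrix.vecHead, Matrix.vecTail]; linarith [hc2]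
  refine ⟨hm₁, hm₂, ?_, ?_, ?_, ?_⟩
  · rw [hB, hh₁, Matrix.toBilin'_apply]
    simp [Fintype.sum_sum_type, Fin.sum_univ_three, Matrix.fromBlocks, Matrix.vecHead, Matrix.vecTail]
    ring_nf
    linarith [hsq]
  · rw [hB, hh₁, hh₂, Matrix.toBilin'_apply]
    simp [Fintype.sum_sum_type, Fin.sum_univ_three, Matrix.fromBlocks, Matrix.vecHead, Matrix.vecTail]
    linarith [hc2]
  · rw [hB, hh₂, Matrix.toBilin'_apply]
    simp [Fintype.sum_sum_type, Fin.sum_univ_three, Matrix.fromBlocks, Matrix.vecHead, Matrix.vecTail]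
  · have hMmem : ∀ x : (Fin r ⊕ Fin 3) → ℤ,
        x ∈ Msub ↔ ∀ j : Fin 3, x (Sum.inr j) = 0 := by
      intro x
      simp [hMsub, Submodule.mem_iInf]
    apply le_antisymm
    · intro x hx
      rw [LinearMap.mem_ker, key] at hx
      have hx1 : x (Sum.inr 1) = -b * x (Sum.inr 0) + c2 * x (Sum.inr 2) := by
        have hz : γ * (x (Sum.inr 1) - (-b * x (Sum.inr 0) + c2 * x (Sum.inr 2))) = 0 := by
          linear_combination hx - x (Sum.inr 2) * hc2
        have := mul_eq_zero.mp hz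
        rcases this with h' | h'
        · exact absurd h' (ne_of_gt hγ)
        · linarith
      rw [Submodule.mem_sup]
      refine ⟨x - x (Sum.inr 0) • h₁ - x (Sum.inr 2) • h₂, ?_,
        x (Sum.inr 0) • h₁ + x (Sum.inr 2) • h₂, ?_, by abel⟩
      · rw [hMmem]
        intro j
        fin_cases j <;>
          simp [hh₁, hh₂, hx1] <;> ring
      · exact Submodule.add_mem _
          (Submodule.smul_mem _ _ (Submodule.subset_span (by simp)))
          (Submodule.smul_mem _ _ (Submodule.subset_span (by simp)))
    · rw [sup_le_iff]
      constructor
      · intro x hx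
        rw [hMmem] at hx
        rw [LinearMap.mem_ker, key, hx 0, hx 1, hx 2]
        ring
      · rw [Submodule.span_le]
        rintro x (rfl | rfl)
        · exact hm₁
        · simpa using hm₂
end

section
/- Let d, t be coprime positive integers and let A = Z/(2d/γ)Z × Z/(2t/γ)Z with γ ∈ {1, 2} (where γ divides both 2d and 2t). Then the subgroup K = {id, s} of Aut(A), where s(x, y) = (x, −y), is a normal subgroup of Aut(A). -/
/-!
An automorphism `g` of `M × N` commutes with `s = id × (-id)` as soon as twice each of its
off-diagonal blocks `M → N`, `N → M` vanishes: comparing `g (s (a, b))` with `s (g (a, b))`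
leaves exactly `2 • (g (0, b)).1` and `2 • (g (a, 0)).2`. For `M = ℤ/m`, `N = ℤ/n` every
homomorphism `M → N` is killed by `gcd m n`, and `gcd (2d/γ) (2t/γ) ∣ 2`.
So `s` is central in `Aut A`, and the subgroup it generates is normal.
-/

theorem AddSubgroup.normal_of_le_center {G : Type*} [AddGroup G] {H : AddSubgroup G}
    (h : H ≤ AddSubgroup.center G) : H.Normal :=
  ⟨fun n hn g => by
    rwa [AddSubgroup.mem_center_iff.1 (h hn) g, add_neg_cancel_right]⟩

theorem AddMonoidHom.gcd_nsmul_apply_eq_zero {M N : Type*} [AddCommGroup M] [AddCommGroup N]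
    {m n : ℕ} (hM : ∀ x : M, m • x = 0) (hN : ∀ y : N, n • y = 0) (f : M →+ N) (x : M) :
    Nat.gcd m n • f x = 0 := by
  have hm : addOrderOf (f x) ∣ m :=
    addOrderOf_dvd_of_nsmul_eq_zero (by rw [← map_nsmul, hM, map_zero])
  exact addOrderOf_dvd_iff_nsmul_eq_zero.1 (Nat.dvd_gcd hm (addOrderOf_dvd_of_nsmul_eq_zero (hN _)))

theorem ZMod.two_nsmul_addMonoidHom_apply_eq_zero {m n : ℕ} (h : Nat.gcd m n ∣ 2)
    (f : ZMod m →+ ZMod n) (x : ZMod m) : 2 • f x = 0 := by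
  obtain ⟨k, hk⟩ := h
  rw [hk, mul_nsmul,
    f.gcd_nsmul_apply_eq_zero (ZModModule.char_nsmul_eq_zero m)
      (ZModModule.char_nsmul_eq_zero n), nsmul_zero]

theorem AddCommute.prodCongr_refl_neg {M N : Type*} [AddCommGroup M] [AddCommGroup N]
    (hMN : ∀ (f : M →+ N) (x : M), 2 • f x = 0) (hNM : ∀ (f : N →+ M) (y : N), 2 • f y = 0)
    (g : AddAut (M × N)) :
    AddCommute (AddEquiv.prodCongr (AddEquiv.refl M) (AddEquiv.neg N)) g := by
  have hfst (b : N) : -(g (0, b)).1 = (g (0, b)).1 := neg_eq_of_add_eq_zero_left <|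
    (two_nsmul _).symm.trans <|
      hNM ((AddMonoidHom.fst M N).comp (g.toAddMonoidHom.comp (AddMonoidHom.inr M N))) b
  have hsnd (a : M) : -(g (a, 0)).2 = (g (a, 0)).2 := neg_eq_of_add_eq_zero_left <|
    (two_nsmul _).symm.trans <|
      hMN ((AddMonoidHom.snd M N).comp (g.toAddMonoidHom.comp (AddMonoidHom.inl M N))) a
  have hσ (p : M × N) : AddEquiv.prodCongr (AddEquiv.refl M) (AddEquiv.neg N) p = (p.1, -p.2) :=
    rfl
  refine DFunLike.ext _ _ fun ⟨a, b⟩ => ?_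
  have hsplit : g (a, b) = g (a, 0) + g (0, b) := by
    rw [← map_add, Prod.mk_add_mk, add_zero, zero_add]
  have hsplit_neg : g (a, -b) = g (a, 0) - g (0, b) := by
    rw [← map_sub, Prod.mk_sub_mk, sub_zero, zero_sub]
  rw [AddAut.add_apply, AddAut.add_apply, hσ, hσ, hsplit, hsplit_neg, Prod.ext_iff]
  simp only [Prod.fst_add, Prod.snd_add, Prod.fst_sub, Prod.snd_sub]
  rw [sub_eq_add_neg, sub_eq_add_neg, hfst, neg_add, hsnd]
  exact ⟨rfl, rfl⟩

theorem stmt_11_general (d t γ : ℕ) (hdt : Nat.Coprime d t)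
    (hγ : γ = 1 ∨ γ = 2)
    (s : AddAut (ZMod (2 * d / γ) × ZMod (2 * t / γ)))
    (hs : s = AddEquiv.prodCongr (AddEquiv.refl (ZMod (2 * d / γ)))
        (AddEquiv.neg (ZMod (2 * t / γ)))) :
    (AddSubgroup.zmultiples s).Normal := by
  have hgcd : Nat.gcd (2 * d / γ) (2 * t / γ) ∣ 2 := by
    rcases hγ with rfl | rfl
    · simp [Nat.gcd_mul_left, hdt.gcd_eq_one]
    · simp [hdt.gcd_eq_one]
  have hcentral : s ∈ AddSubgroup.center _ := AddSubgroup.mem_center_iff.2 fun g =>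
    (hs ▸ AddCommute.prodCongr_refl_neg (ZMod.two_nsmul_addMonoidHom_apply_eq_zero hgcd)
      (ZMod.two_nsmul_addMonoidHom_apply_eq_zero (Nat.gcd_comm _ _ ▸ hgcd)) g).symm.eq
  exact AddSubgroup.normal_of_le_center (AddSubgroup.zmultiples_le.2 hcentral)

theorem stmt_11 (d t γ : ℕ) (hd : 0 < d) (ht : 0 < t) (hdt : Nat.Coprime d t)
    (hγ : γ = 1 ∨ γ = 2) (hγd : γ ∣ 2 * d) (hγt : γ ∣ 2 * t)
    (s : AddAut (ZMod (2 * d / γ) × ZMod (2 * t / γ)))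
    (hs : s = AddEquiv.prodCongr (AddEquiv.refl (ZMod (2 * d / γ)))
        (AddEquiv.neg (ZMod (2 * t / γ)))) :
    (AddSubgroup.zmultiples s).Normal :=
  stmt_11_general d t γ hdt hγ s hs
end

section
/- Let t, d be coprime positive integers and let g be an automorphism of A = Z/2dZ × Z/2tZ, represented by a matrix [[a, e], [b, f]] (columns give images of (1,0) and (0,1)). Then t divides b and d divides e. Consequently g commutes with the automorphism s(x, y) = (x, −y). -/
/-!
STATEMENT 12. Let `t, d` be coprime positive integers and `g` an automorphism of
`A = ℤ/2d × ℤ/2t`, with matrix `[[a, e], [b, f]]`, i.e. `g (1,0) = (a, b)` and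
`g (0,1) = (e, f)`.  Then `t ∣ b` and `d ∣ e` (in `ℤ/2t` resp. `ℤ/2d`), and consequently
`g` commutes with the automorphism `s(x, y) = (x, -y)`.
-/
theorem stmt_12 (d t : ℕ) (hd : 0 < d) (ht : 0 < t) (hdt : Nat.Coprime d t)
    (g : AddAut (ZMod (2 * d) × ZMod (2 * t)))
    (a : ZMod (2 * d)) (b : ZMod (2 * t)) (e : ZMod (2 * d)) (f : ZMod (2 * t))
    (hab : g (1, 0) = (a, b)) (hef : g (0, 1) = (e, f))
    (s : AddAut (ZMod (2 * d) × ZMod (2 * t)))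
    (hs : s = AddEquiv.prodCongr (AddEquiv.refl (ZMod (2 * d)))
        (AddEquiv.neg (ZMod (2 * t)))) :
    (t : ZMod (2 * t)) ∣ b ∧ (d : ZMod (2 * d)) ∣ e ∧ ∀ x, g (s x) = s (g x) := by
  have h2d : 0 < 2 * d := by omega
  have h2t : 0 < 2 * t := by omega
  haveI : NeZero (2 * d) := ⟨by omega⟩
  haveI : NeZero (2 * t) := ⟨by omega⟩
  -- t ∣ b
  have hb0 : ((2 * d : ℕ) : ZMod (2 * t)) * b = 0 := by
    have h1 : (2 * d) • ((1, 0) : ZMod (2 * d) × ZMod (2 * t)) = 0 := by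
      ext
      · simp [nsmul_eq_mul]
      · simp
    have h2 : (2 * d) • ((a, b) : ZMod (2 * d) × ZMod (2 * t)) = 0 := by
      rw [← hab, ← map_nsmul, h1, map_zero]
    have := congrArg Prod.snd h2
    simpa [nsmul_eq_mul] using this
  have htb : t ∣ b.val := by
    have : ((2 * d * b.val : ℕ) : ZMod (2 * t)) = 0 := by
      rw [Nat.cast_mul, ZMod.natCast_zmod_val]
      exact hb0
    rw [ZMod.natCast_eq_zero_iff] at this
    have h3 : t ∣ d * b.val := by
      rw [show 2 * d * b.val = 2 * (d * b.val) by ring] at this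
      exact (Nat.mul_dvd_mul_iff_left (by norm_num : 0 < 2)).mp this
    exact (Nat.Coprime.symm hdt).dvd_of_dvd_mul_left h3
  have hbdvd : (t : ZMod (2 * t)) ∣ b := by
    rcases htb with ⟨c, hc⟩
    refine ⟨(c : ZMod (2 * t)), ?_⟩
    rw [← ZMod.natCast_zmod_val b, hc]
    push_cast; ring
  -- d ∣ e
  have he0 : ((2 * t : ℕ) : ZMod (2 * d)) * e = 0 := by
    have h1 : (2 * t) • ((0, 1) : ZMod (2 * d) × ZMod (2 * t)) = 0 := by
      ext
      · simp
      · simp [nsmul_eq_mul]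
    have h2 : (2 * t) • ((e, f) : ZMod (2 * d) × ZMod (2 * t)) = 0 := by
      rw [← hef, ← map_nsmul, h1, map_zero]
    have := congrArg Prod.fst h2
    simpa [nsmul_eq_mul] using this
  have hde : d ∣ e.val := by
    have : ((2 * t * e.val : ℕ) : ZMod (2 * d)) = 0 := by
      rw [Nat.cast_mul, ZMod.natCast_zmod_val]
      exact he0
    rw [ZMod.natCast_eq_zero_iff] at this
    have h3 : d ∣ t * e.val := by
      rw [show 2 * t * e.val = 2 * (t * e.val) by ring] at this
      exact (Nat.mul_dvd_mul_iff_left (by norm_num : 0 < 2)).mp this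
    exact hdt.dvd_of_dvd_mul_left h3
  have hedvd : (d : ZMod (2 * d)) ∣ e := by
    rcases hde with ⟨c, hc⟩
    refine ⟨(c : ZMod (2 * d)), ?_⟩
    rw [← ZMod.natCast_zmod_val e, hc]
    push_cast; ring
  -- key torsion facts
  have h2b : b + b = 0 := by
    rcases hbdvd with ⟨c, hc⟩
    rw [hc]
    have : (t : ZMod (2 * t)) * c + (t : ZMod (2 * t)) * c
        = ((2 * t : ℕ) : ZMod (2 * t)) * c := by push_cast; ring
    rw [this, ZMod.natCast_self, zero_mul]
  have h2e : e + e = 0 := by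
    rcases hedvd with ⟨c, hc⟩
    rw [hc]
    have : (d : ZMod (2 * d)) * c + (d : ZMod (2 * d)) * c
        = ((2 * d : ℕ) : ZMod (2 * d)) * c := by push_cast; ring
    rw [this, ZMod.natCast_self, zero_mul]
  have hsapp : ∀ p : ZMod (2 * d) × ZMod (2 * t), s p = (p.1, -p.2) := by
    intro p; rw [hs]; rfl
  refine ⟨hbdvd, hedvd, ?_⟩
  have key1 : g (s (1, 0)) = s (g (1, 0)) := by
    rw [hsapp, hsapp, hab]
    show g (1, -0) = (a, -b)
    rw [neg_zero, hab]
    ext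
    · rfl
    · show b = -b
      linear_combination h2b
  have key2 : g (s (0, 1)) = s (g (0, 1)) := by
    rw [hsapp, hsapp, hef]
    show g (0, -1) = (e, -f)
    have : g (0, -1) = -g (0, 1) := by
      rw [← map_neg]; norm_num
    rw [this, hef]
    ext
    · show -e = e
      linear_combination -h2e
    · rfl
  intro x
  have hxdecomp : x = x.1.val • ((1, 0) : ZMod (2 * d) × ZMod (2 * t))
      + x.2.val • ((0, 1) : ZMod (2 * d) × ZMod (2 * t)) := by
    ext
    · simp [nsmul_eq_mul, ZMod.natCast_zmod_val]
    · simp [nsmul_eq_mul, ZMod.natCast_zmod_val]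
  conv_lhs => rw [hxdecomp]
  conv_rhs => rw [hxdecomp]
  simp only [map_add, map_nsmul, key1, key2]
end

section
/- Let Λ = M ⊕ Zk ⊕ Zℓ with M even unimodular, k² = −2d, ℓ² = −2t (d, t > 0). Let β = am + bk + cℓ be a primitive vector (m ∈ M primitive, gcd(a,b,c) = 1) with β² < 0 and β² | 2·div(β). Then the induced action of the reflection r_β on A_Λ ≅ Z/2dZ × Z/2tZ (generated by k* = [k/2d] and ℓ* = [ℓ/2t]) is the identity if and only if β² = −2. -/
/-!
Write `β² = 2s`, which is possible since `m²` is even. Since `div(β)` divides `a`, the hypothesis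
`β² ∣ 2 div(β)` gives `s ∣ a`. If `r_β` acts trivially, the diagonal entries `4db²/β²` and
`4tc²/β²` vanish mod `2d` and `2t`, which says `s ∣ b²` and `s ∣ c²`. A prime dividing `s` would
then divide `a`, `b` and `c`, so `s = ±1`, and `β² < 0` forces `β² = -2`. Conversely, for
`β² = -2` every entry `4db²/β², …` is visibly a multiple of `2d`, resp. `2t`.
-/

theorem Int.isUnit_of_dvd_of_dvd_sq_of_dvd_sq {s a b c : ℤ} (hprim : Int.gcd (Int.gcd a b) c = 1)
    (ha : s ∣ a) (hb : s ∣ b ^ 2) (hc : s ∣ c ^ 2) : IsUnit s := by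
  rw [Int.isUnit_iff_natAbs_eq]
  by_contra hs
  obtain ⟨p, hp, hps⟩ := Int.exists_prime_and_dvd hs
  have hpb : p ∣ b := hp.dvd_of_dvd_pow (hps.trans hb)
  have hpc : p ∣ c := hp.dvd_of_dvd_pow (hps.trans hc)
  have hp_one : p ∣ 1 := by
    simpa [hprim] using Int.dvd_coe_gcd (Int.dvd_coe_gcd (hps.trans ha) hpb) hpc
  exact hp.not_isUnit (isUnit_of_dvd_one hp_one)

theorem Int.eq_neg_two_of_dvd_two_mul {β a b c : ℤ} (hprim : Int.gcd (Int.gcd a b) c = 1)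
    (heven : 2 ∣ β) (hneg : β < 0) (ha : β ∣ 2 * a) (hb : β ∣ 2 * b ^ 2)
    (hc : β ∣ 2 * c ^ 2) : β = -2 := by
  obtain ⟨s, rfl⟩ := heven
  have hcancel {x : ℤ} : 2 * s ∣ 2 * x → s ∣ x := (mul_dvd_mul_iff_left two_ne_zero).mp
  rcases Int.isUnit_iff.mp
      (Int.isUnit_of_dvd_of_dvd_sq_of_dvd_sq hprim (hcancel ha) (hcancel hb) (hcancel hc))
    with rfl | rfl <;> omega

theorem dvd_of_mul_eq_mul_of_dvd {M : Type*} [CommMonoidWithZero M] [IsCancelMulZero M]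
    {β e n x : M} (hn : n ≠ 0) (h : β * e = n * x) (he : n ∣ e) : β ∣ x := by
  obtain ⟨f, rfl⟩ := he
  exact ⟨f, mul_left_cancel₀ hn (by rw [← h, mul_left_comm])⟩

theorem Int.dvd_of_one_add_modEq_one {n e : ℤ} (h : 1 + e ≡ 1 [ZMOD n]) : n ∣ e :=
  Int.modEq_zero_iff_dvd.mp (Int.ModEq.add_left_cancel' 1 (by rwa [add_zero]))

theorem stmt_13 (t d a b c m2 β2 D : ℤ) (ht : 0 < t) (hd : 0 < d)
    (hprim : Int.gcd (Int.gcd a b) c = 1) (heven : 2 ∣ m2)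
    (hβ2 : β2 = a ^ 2 * m2 - 2 * d * b ^ 2 - 2 * t * c ^ 2) (hneg : β2 < 0)
    (hD : D = Int.gcd (Int.gcd a (2 * d * b)) (2 * t * c))
    (hrefl : β2 ∣ 2 * D) :
    (∃ e₁₁ e₁₂ e₂₁ e₂₂ : ℤ,
        β2 * e₁₁ = 4 * d * b ^ 2 ∧ β2 * e₁₂ = 4 * d * b * c ∧
        β2 * e₂₁ = 4 * t * b * c ∧ β2 * e₂₂ = 4 * t * c ^ 2 ∧
        1 + e₁₁ ≡ 1 [ZMOD 2 * d] ∧ e₁₂ ≡ 0 [ZMOD 2 * d] ∧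
        e₂₁ ≡ 0 [ZMOD 2 * t] ∧ 1 + e₂₂ ≡ 1 [ZMOD 2 * t])
      ↔ β2 = -2 := by
  constructor
  · rintro ⟨e₁₁, -, -, e₂₂, h₁₁, -, -, h₂₂, c₁₁, -, -, c₂₂⟩
    have hβ_even : 2 ∣ β2 := by
      obtain ⟨m, rfl⟩ := heven
      exact ⟨a ^ 2 * m - d * b ^ 2 - t * c ^ 2, by rw [hβ2]; ring⟩
    have hDa : D ∣ a := hD ▸ (Int.gcd_dvd_left _ _).trans (Int.gcd_dvd_left _ _)
    refine Int.eq_neg_two_of_dvd_two_mul hprim hβ_even hneg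
      (hrefl.trans (mul_dvd_mul_left 2 hDa)) ?_ ?_
    · exact dvd_of_mul_eq_mul_of_dvd (by positivity) (by rw [h₁₁]; ring)
        (Int.dvd_of_one_add_modEq_one c₁₁)
    · exact dvd_of_mul_eq_mul_of_dvd (by positivity) (by rw [h₂₂]; ring)
        (Int.dvd_of_one_add_modEq_one c₂₂)
  · rintro rfl
    refine ⟨-(2 * d * b ^ 2), -(2 * d * b * c), -(2 * t * b * c), -(2 * t * c ^ 2),
      by ring, by ring, by ring, by ring, ?_, ?_, ?_, ?_⟩
    · exact Int.modEq_iff_dvd.mpr ⟨b ^ 2, by ring⟩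
    · exact Int.modEq_zero_iff_dvd.mpr ⟨-(b * c), by ring⟩
    · exact Int.modEq_zero_iff_dvd.mpr ⟨-(b * c), by ring⟩
    · exact Int.modEq_iff_dvd.mpr ⟨c ^ 2, by ring⟩
end

section
/- Let Λ = M ⊕ Zk ⊕ Zℓ with M even unimodular, k² = −2d, ℓ² = −2t. Let β ∈ Λ be a primitive vector with β² < 0, β² | 2·div(β), and suppose the induced isometry of r_β on A_Λ ≅ Z/2dZ × Z/2tZ equals s = diag(1, −1). Then β² = −2t and 2td divides β·k. -/
/-!
On `A_Λ` the reflection `r_β` acts on the `ℓ*`-coordinate by `1 + 4t c²/β² ≡ -1 (mod 2t)`,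
which forces `β² = t g` with `g (t u - 1) = 2c²`. The factor `g` divides `2a` (as
`β² ∣ 2 div(β)`), `2b²` (from the `k*`-entry) and `2c²`, so by primitivity `g ∣ 2`; as `β²` is
even and `g < 0`, parity leaves `g = -2`. Then `c² ≡ 1 (mod t)`, so the off-diagonal entry
`4t bc/β² ≡ 0 (mod 2t)` gives `t ∣ bc` and hence `t ∣ b`.
-/

theorem dvd_of_dvd_mul_of_isCoprime {R : Type*} [CommRing R] {n k x y : R}
    (hx : n ∣ k * x) (hy : n ∣ k * y) (h : IsCoprime x y) : n ∣ k := by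
  obtain ⟨p, q, hpq⟩ := h
  have hk : k = p * (k * x) + q * (k * y) := by linear_combination -k * hpq
  rw [hk]
  exact dvd_add (hx.mul_left p) (hy.mul_left q)

theorem Int.dvd_mul_gcd_sq {n k a b : ℤ} (ha : n ∣ k * a) (hb : n ∣ k * b ^ 2) :
    n ∣ k * (Int.gcd a b : ℤ) ^ 2 := by
  obtain ⟨A, B, hAB⟩ : ∃ A B, (Int.gcd a b : ℤ) ^ 2 = a ^ 2 * A + b ^ 2 * B :=
    ⟨_, _, by rw [← Int.gcd_eq_gcd_ab, Int.pow_gcd_pow, Nat.cast_pow]⟩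
  rw [hAB, show k * (a ^ 2 * A + b ^ 2 * B) = k * a * a * A + k * b ^ 2 * B by ring]
  exact dvd_add ((ha.mul_right a).mul_right A) (hb.mul_right B)

theorem Int.dvd_of_dvd_mul_sq_of_gcd_eq_one {n k a b c : ℤ} (h : Int.gcd (Int.gcd a b) c = 1)
    (ha : n ∣ k * a) (hb : n ∣ k * b ^ 2) (hc : n ∣ k * c ^ 2) : n ∣ k :=
  dvd_of_dvd_mul_of_isCoprime (Int.dvd_mul_gcd_sq ha hb) hc
    (Int.isCoprime_iff_gcd_eq_one.mpr h).pow

theorem dvd_of_mul_eq_mul_of_dvd_s15 {M : Type*} [CommMonoidWithZero M]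
    [IsLeftCancelMulZero M] {β e m X : M}
    (hm : m ≠ 0) (he : β * e = m * X) (hdvd : m ∣ e) : β ∣ X := by
  obtain ⟨y, rfl⟩ := hdvd
  exact ⟨y, mul_left_cancel₀ hm (he.symm.trans (mul_left_comm _ _ _))⟩

theorem exists_eq_mul_of_mul_eq_four_mul_sq {β e t c : ℤ} (he : β * e = 4 * t * c ^ 2)
    (hdvd : 2 * t ∣ e + 2) : ∃ g u, β = t * g ∧ g * (t * u - 1) = 2 * c ^ 2 := by
  obtain ⟨u, hu⟩ := hdvd
  have h : β * (t * u - 1) = 2 * t * c ^ 2 :=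
    mul_left_cancel₀ two_ne_zero (by linear_combination he - β * hu)
  exact ⟨β * u - 2 * c ^ 2, u, by linear_combination -h, by linear_combination u * h⟩

theorem eq_neg_two_of_dvd_two {t g u c : ℤ} (hg : g ∣ 2) (hneg : g < 0) (heven : 2 ∣ t * g)
    (hgc : g * (t * u - 1) = 2 * c ^ 2) : g = -2 := by
  have hle : -g ≤ 2 := Int.le_of_dvd two_pos (neg_dvd.mpr hg)
  obtain rfl | rfl : g = -1 ∨ g = -2 := by omega
  · obtain ⟨s, rfl⟩ : 2 ∣ t := by simpa using heven
    have h : (2 : ℤ) ∣ 1 := ⟨c ^ 2 + s * u, by linear_combination hgc⟩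
    norm_num at h
  · rfl

theorem stmt_15_general (t d a b c m2 β2 D : ℤ) (ht : 0 < t) (hd : 0 < d)
    (hprim : Int.gcd (Int.gcd a b) c = 1) (heven : 2 ∣ m2)
    (hβ2 : β2 = a ^ 2 * m2 - 2 * d * b ^ 2 - 2 * t * c ^ 2) (hneg : β2 < 0)
    (hD : D = Int.gcd (Int.gcd a (2 * d * b)) (2 * t * c))
    (hrefl : β2 ∣ 2 * D)
    (e₁₁ e₂₁ e₂₂ : ℤ)
    (he₁₁ : β2 * e₁₁ = 4 * d * b ^ 2)
    (he₂₁ : β2 * e₂₁ = 4 * t * b * c) (he₂₂ : β2 * e₂₂ = 4 * t * c ^ 2)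
    (hs₁₁ : 1 + e₁₁ ≡ 1 [ZMOD 2 * d])
    (hs₂₁ : e₂₁ ≡ 0 [ZMOD 2 * t]) (hs₂₂ : 1 + e₂₂ ≡ -1 [ZMOD 2 * t]) :
    β2 = -(2 * t) ∧ (2 * t * d) ∣ -(2 * d * b) := by
  have hβa : β2 ∣ 2 * a :=
    hrefl.trans (mul_dvd_mul_left 2 (hD ▸ (Int.gcd_dvd_left _ _).trans (Int.gcd_dvd_left _ _)))
  have hβb : β2 ∣ 2 * b ^ 2 :=
    dvd_of_mul_eq_mul_of_dvd_s15 (m := 2 * d) (by positivity) (he₁₁.trans (by ring))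
      (by simpa using hs₁₁.symm.dvd)
  have hβbc : β2 ∣ 2 * (b * c) :=
    dvd_of_mul_eq_mul_of_dvd_s15 (m := 2 * t) (by positivity) (he₂₁.trans (by ring))
      (by simpa using hs₂₁.symm.dvd)
  obtain ⟨g, u, rfl, hgc⟩ := exists_eq_mul_of_mul_eq_four_mul_sq he₂₂
    (by convert hs₂₂.symm.dvd using 1; ring)
  have hg2 : g ∣ 2 := Int.dvd_of_dvd_mul_sq_of_gcd_eq_one hprim
    ((dvd_mul_left g t).trans hβa) ((dvd_mul_left g t).trans hβb) (Dvd.intro _ hgc)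
  have hβeven : 2 ∣ t * g := by
    obtain ⟨m, rfl⟩ := heven
    exact ⟨a ^ 2 * m - d * b ^ 2 - t * c ^ 2, by linear_combination hβ2⟩
  obtain rfl := eq_neg_two_of_dvd_two hg2 (neg_of_mul_neg_right hneg ht.le) hβeven hgc
  have hβ : t * -2 = -(2 * t) := by ring
  rw [hβ, neg_dvd, mul_dvd_mul_iff_left two_ne_zero] at hβbc
  have htc : IsCoprime t c := ⟨u, c, by linarith⟩
  obtain ⟨s, rfl⟩ := htc.dvd_of_dvd_mul_right hβbc
  exact ⟨hβ, Dvd.intro (-s) (by ring)⟩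

theorem stmt_15 (t d a b c m2 β2 D : ℤ) (ht : 0 < t) (hd : 0 < d)
    (hprim : Int.gcd (Int.gcd a b) c = 1) (heven : 2 ∣ m2)
    (hβ2 : β2 = a ^ 2 * m2 - 2 * d * b ^ 2 - 2 * t * c ^ 2) (hneg : β2 < 0)
    (hD : D = Int.gcd (Int.gcd a (2 * d * b)) (2 * t * c))
    (hrefl : β2 ∣ 2 * D)
    (e₁₁ e₁₂ e₂₁ e₂₂ : ℤ)
    (he₁₁ : β2 * e₁₁ = 4 * d * b ^ 2) (he₁₂ : β2 * e₁₂ = 4 * d * b * c)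
    (he₂₁ : β2 * e₂₁ = 4 * t * b * c) (he₂₂ : β2 * e₂₂ = 4 * t * c ^ 2)
    (hs₁₁ : 1 + e₁₁ ≡ 1 [ZMOD 2 * d]) (hs₁₂ : e₁₂ ≡ 0 [ZMOD 2 * d])
    (hs₂₁ : e₂₁ ≡ 0 [ZMOD 2 * t]) (hs₂₂ : 1 + e₂₂ ≡ -1 [ZMOD 2 * t]) :
    β2 = -(2 * t) ∧ (2 * t * d) ∣ -(2 * d * b) :=
  stmt_15_general t d a b c m2 β2 D ht hd hprim heven hβ2 hneg hD hrefl e₁₁ e₂₁ e₂₂ he₁₁ he₂₁ he₂₂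
    hs₁₁ hs₂₁ hs₂₂
end

section
/- Let Λ = M ⊕ Zk ⊕ Zℓ with M even unimodular of even rank, k² = −2d, ℓ² = −2t. Let β ∈ Λ be a primitive vector with β² < 0 and β² | 2·div(β), such that the induced isometry of r_β on A_Λ ≅ Z/2dZ × Z/2tZ equals −id. Then β² = −2td, gcd(t, d) = 1, and 2td divides both β·k and β·ℓ. -/
/-!
Write `N = -β²`. The congruences say `N (1 + d x) = 2 d b²`, `N (1 + t y) = 2 t c²` and
`N u = 2 b c` for some integers `x, y, u`, and reflectivity gives `N ∣ 2 a`. Comparing the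
product of the first two with the square of the third gives `(1 + d x)(1 + t y) = t d u²`, so
`d ∣ 1 + t y` and `t, d` are coprime; hence `t d ∣ N`. Writing `N = t d n`, the cofactor `n`
divides `2a, 2b², 2bc, 2c²`, hence divides `2` by primitivity. If `n = 1`, then `t d = -β²` is
even, and `t (1 + d x) = 2 b²`, `d (1 + t y) = 2 c²` make both `t` and `d` even, which is absurd.
So `N = 2 t d`, then `t` divides `a, b², bc` and `d` divides `a, bc, c²`, so `t ∣ b`, `d ∣ c`.
-/

theorem Int.exists_add_add_eq_one_of_gcd_gcd_eq_one {a b c : ℤ}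
    (h : Int.gcd (Int.gcd a b) c = 1) : ∃ α β γ : ℤ, a * α + b * β + c * γ = 1 := by
  obtain ⟨u, v, huv⟩ := Int.isCoprime_iff_gcd_eq_one.mpr h
  exact ⟨u * Int.gcdA a b, u * Int.gcdB a b, v, by rw [← huv, Int.gcd_eq_gcd_ab a b]; ring⟩

theorem Int.dvd_of_dvd_mul_of_gcd_gcd_eq_one {a b c n m : ℤ} (h : Int.gcd (Int.gcd a b) c = 1)
    (ha : n ∣ m * a) (hb : n ∣ m * b) (hc : n ∣ m * c) : n ∣ m := by
  obtain ⟨α, β, γ, hαβγ⟩ := Int.exists_add_add_eq_one_of_gcd_gcd_eq_one h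
  have hm : m = m * a * α + m * b * β + m * c * γ := by linear_combination -m * hαβγ
  rw [hm]
  exact dvd_add (dvd_add (ha.mul_right α) (hb.mul_right β)) (hc.mul_right γ)

theorem Int.dvd_of_dvd_mul_sq_of_gcd_gcd_eq_one {a b c n m : ℤ} (h : Int.gcd (Int.gcd a b) c = 1)
    (ha : n ∣ m * a) (hb : n ∣ m * b ^ 2) (hbc : n ∣ m * (b * c)) (hc : n ∣ m * c ^ 2) :
    n ∣ m := by
  have hmb : n ∣ m * b := Int.dvd_of_dvd_mul_of_gcd_gcd_eq_one h
    (by simpa only [mul_right_comm] using ha.mul_right b) (by simpa only [sq, mul_assoc] using hb)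
    (by simpa only [mul_assoc] using hbc)
  have hmc : n ∣ m * c := Int.dvd_of_dvd_mul_of_gcd_gcd_eq_one h
    (by simpa only [mul_right_comm] using ha.mul_right c)
    (by simpa only [mul_assoc, mul_comm b c] using hbc) (by simpa only [sq, mul_assoc] using hc)
  exact Int.dvd_of_dvd_mul_of_gcd_gcd_eq_one h ha hmb hmc

theorem Int.dvd_of_mul_one_add_mul_eq {N d x m : ℤ} (h : N * (1 + d * x) = d * m) : d ∣ N :=
  (show IsCoprime d (1 + d * x) from ⟨-x, 1, by ring⟩).dvd_of_dvd_mul_right ⟨m, h⟩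

theorem Int.even_of_mul_one_add_mul_eq_two_mul {t d y m : ℤ} (ht : Even t)
    (h : d * (1 + t * y) = 2 * m) : Even d := by
  have hodd : ¬ Even (1 + t * y) := by simp [Int.even_add, parity_simps, ht]
  exact (Int.even_mul.mp (h ▸ even_two_mul m)).resolve_right hodd

theorem exists_neg_mul_one_add_mul_eq_of_modEq_neg_one {β e d m : ℤ} (he : β * e = 2 * m)
    (hs : 1 + e ≡ -1 [ZMOD 2 * d]) : ∃ x, -β * (1 + d * x) = m := by
  obtain ⟨x, hx⟩ := hs.dvd
  exact ⟨x, mul_left_cancel₀ two_ne_zero (by linear_combination he + β * hx)⟩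

theorem exists_neg_mul_eq_of_modEq_zero {β e d m : ℤ} (hd : d ≠ 0) (he : β * e = 2 * d * m)
    (hs : e ≡ 0 [ZMOD 2 * d]) : ∃ u, -β * u = m := by
  obtain ⟨u, hu⟩ := hs.dvd
  exact ⟨u, mul_left_cancel₀ (mul_ne_zero two_ne_zero hd)
    (by linear_combination he + β * hu)⟩

section ReflectionEquations

variable {t d a b c m2 N x y u : ℤ}

theorem isCoprime_of_reflection_eqns (hN : N ≠ 0) (hX : N * (1 + d * x) = 2 * d * b ^ 2)
    (hY : N * (1 + t * y) = 2 * t * c ^ 2) (hU : N * u = 2 * b * c) : IsCoprime t d := by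
  have hXY : (1 + d * x) * (1 + t * y) = t * d * u ^ 2 := mul_left_cancel₀ (pow_ne_zero 2 hN)
    (by linear_combination N * (1 + t * y) * hX + 2 * d * b ^ 2 * hY
      - t * d * (N * u + 2 * b * c) * hU)
  exact ⟨-y, t * u ^ 2 - x - t * x * y, by linear_combination -hXY⟩

theorem not_even_mul_of_reflection_eqns (hcop : IsCoprime t d)
    (hX : t * (1 + d * x) = 2 * b ^ 2) (hY : d * (1 + t * y) = 2 * c ^ 2) : ¬ Even (t * d) := by
  intro htd
  obtain ⟨hte, hde⟩ : Even t ∧ Even d := by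
    rcases Int.even_mul.mp htd with hte | hde
    · exact ⟨hte, Int.even_of_mul_one_add_mul_eq_two_mul hte hY⟩
    · exact ⟨Int.even_of_mul_one_add_mul_eq_two_mul hde hX, hde⟩
  have := Int.isUnit_iff.mp (hcop.isUnit_of_dvd' hte.two_dvd hde.two_dvd)
  omega

theorem eq_two_mul_mul_of_reflection_eqns (hprim : Int.gcd (Int.gcd a b) c = 1) (heven : 2 ∣ m2)
    (ht : 0 < t) (hd : 0 < d) (hN : 0 < N) (hNa : N ∣ 2 * a)
    (hβ : a ^ 2 * m2 = 2 * d * b ^ 2 + 2 * t * c ^ 2 - N)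
    (hX : N * (1 + d * x) = 2 * d * b ^ 2) (hY : N * (1 + t * y) = 2 * t * c ^ 2)
    (hU : N * u = 2 * b * c) : N = 2 * t * d := by
  have hcop := isCoprime_of_reflection_eqns hN.ne' hX hY hU
  obtain ⟨n, rfl⟩ : t * d ∣ N := hcop.mul_dvd
    (Int.dvd_of_mul_one_add_mul_eq (x := y) (m := 2 * c ^ 2) (by linear_combination hY))
    (Int.dvd_of_mul_one_add_mul_eq (x := x) (m := 2 * b ^ 2) (by linear_combination hX))
  have hn : 0 < n := pos_of_mul_pos_right hN (mul_pos ht hd).le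
  have hb : t * (1 + d * x) * n = 2 * b ^ 2 :=
    mul_left_cancel₀ hd.ne' (by linear_combination hX)
  have hc : d * (1 + t * y) * n = 2 * c ^ 2 :=
    mul_left_cancel₀ ht.ne' (by linear_combination hY)
  have hn2 : n ∣ 2 := Int.dvd_of_dvd_mul_sq_of_gcd_gcd_eq_one hprim
    ((dvd_mul_left n (t * d)).trans hNa) (Dvd.intro_left _ hb)
    (Dvd.intro_left (t * d * u) (by linear_combination hU)) (Dvd.intro_left _ hc)
  obtain rfl | rfl : n = 1 ∨ n = 2 := by have := Int.le_of_dvd two_pos hn2; omega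
  · obtain ⟨m', rfl⟩ := heven
    have hb1 : t * (1 + d * x) = 2 * b ^ 2 := by linear_combination hb
    have hc1 : d * (1 + t * y) = 2 * c ^ 2 := by linear_combination hc
    exact absurd ⟨d * b ^ 2 + t * c ^ 2 - a ^ 2 * m', by linear_combination hβ⟩
      (not_even_mul_of_reflection_eqns hcop hb1 hc1)
  · ring

theorem dvd_and_dvd_of_reflection_eqns (hprim : Int.gcd (Int.gcd a b) c = 1) (ht : t ≠ 0)
    (hd : d ≠ 0) (hNa : 2 * t * d ∣ 2 * a) (hX : 2 * t * d * (1 + d * x) = 2 * d * b ^ 2)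
    (hY : 2 * t * d * (1 + t * y) = 2 * t * c ^ 2) (hU : 2 * t * d * u = 2 * b * c) :
    t ∣ b ∧ d ∣ c := by
  have ha : t * d ∣ a :=
    (mul_dvd_mul_iff_left two_ne_zero).mp (by simpa only [mul_assoc] using hNa)
  have hbc : b * c = t * d * u := mul_left_cancel₀ two_ne_zero (by linear_combination -hU)
  constructor
  · refine Int.dvd_of_dvd_mul_of_gcd_gcd_eq_one hprim (m := b)
      (((dvd_mul_right t d).trans ha).mul_left b) ⟨1 + d * x, ?_⟩
      ⟨d * u, by linear_combination hbc⟩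
    exact mul_left_cancel₀ (mul_ne_zero two_ne_zero hd) (by linear_combination -hX)
  · refine Int.dvd_of_dvd_mul_of_gcd_gcd_eq_one hprim (m := c)
      (((dvd_mul_left d t).trans ha).mul_left c) ⟨t * u, by linear_combination hbc⟩
      ⟨1 + t * y, ?_⟩
    exact mul_left_cancel₀ (mul_ne_zero two_ne_zero ht) (by linear_combination -hY)

end ReflectionEquations

theorem stmt_16_general (t d a b c m2 β2 D : ℤ) (ht : 0 < t) (hd : 0 < d)
    (hprim : Int.gcd (Int.gcd a b) c = 1) (heven : 2 ∣ m2)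
    (hβ2 : β2 = a ^ 2 * m2 - 2 * d * b ^ 2 - 2 * t * c ^ 2) (hneg : β2 < 0)
    (hD : D = Int.gcd (Int.gcd a (2 * d * b)) (2 * t * c))
    (hrefl : β2 ∣ 2 * D)
    (e₁₁ e₁₂ e₂₂ : ℤ)
    (he₁₁ : β2 * e₁₁ = 4 * d * b ^ 2) (he₁₂ : β2 * e₁₂ = 4 * d * b * c)
    (he₂₂ : β2 * e₂₂ = 4 * t * c ^ 2)
    (hs₁₁ : 1 + e₁₁ ≡ -1 [ZMOD 2 * d]) (hs₁₂ : e₁₂ ≡ 0 [ZMOD 2 * d])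
    (hs₂₂ : 1 + e₂₂ ≡ -1 [ZMOD 2 * t]) :
    β2 = -(2 * t * d) ∧ Int.gcd t d = 1 ∧ (2 * t * d) ∣ -(2 * d * b) ∧ (2 * t * d) ∣ -(2 * t * c) := by
  obtain ⟨x, hX⟩ := exists_neg_mul_one_add_mul_eq_of_modEq_neg_one
    (β := β2) (m := 2 * d * b ^ 2) (by linear_combination he₁₁) hs₁₁
  obtain ⟨y, hY⟩ := exists_neg_mul_one_add_mul_eq_of_modEq_neg_one
    (β := β2) (m := 2 * t * c ^ 2) (by linear_combination he₂₂) hs₂₂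
  obtain ⟨u, hU⟩ := exists_neg_mul_eq_of_modEq_zero hd.ne' (β := β2) (m := 2 * b * c)
    (by linear_combination he₁₂) hs₁₂
  have hDa : D ∣ a := hD ▸ (Int.gcd_dvd_left ..).trans (Int.gcd_dvd_left ..)
  have hNa : -β2 ∣ 2 * a := (neg_dvd.mpr hrefl).trans (mul_dvd_mul_left 2 hDa)
  have hcop := isCoprime_of_reflection_eqns (by linarith) hX hY hU
  have hN := eq_two_mul_mul_of_reflection_eqns hprim heven ht hd (by linarith) hNa
    (by linear_combination -hβ2) hX hY hU
  rw [hN] at hNa hX hY hU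
  obtain ⟨htb, hdc⟩ := dvd_and_dvd_of_reflection_eqns hprim ht.ne' hd.ne' hNa hX hY hU
  refine ⟨by linarith, Int.isCoprime_iff_gcd_eq_one.mp hcop, dvd_neg.mpr ?_, dvd_neg.mpr ?_⟩
  · simpa only [mul_right_comm] using mul_dvd_mul_left (2 * d) htb
  · simpa only [mul_assoc] using mul_dvd_mul_left (2 * t) hdc

theorem stmt_16 (t d a b c m2 β2 D : ℤ) (ht : 0 < t) (hd : 0 < d)
    (hprim : Int.gcd (Int.gcd a b) c = 1) (heven : 2 ∣ m2)
    (hβ2 : β2 = a ^ 2 * m2 - 2 * d * b ^ 2 - 2 * t * c ^ 2) (hneg : β2 < 0)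
    (hD : D = Int.gcd (Int.gcd a (2 * d * b)) (2 * t * c))
    (hrefl : β2 ∣ 2 * D)
    (e₁₁ e₁₂ e₂₁ e₂₂ : ℤ)
    (he₁₁ : β2 * e₁₁ = 4 * d * b ^ 2) (he₁₂ : β2 * e₁₂ = 4 * d * b * c)
    (he₂₁ : β2 * e₂₁ = 4 * t * b * c) (he₂₂ : β2 * e₂₂ = 4 * t * c ^ 2)
    (hs₁₁ : 1 + e₁₁ ≡ -1 [ZMOD 2 * d]) (hs₁₂ : e₁₂ ≡ 0 [ZMOD 2 * d])
    (hs₂₁ : e₂₁ ≡ 0 [ZMOD 2 * t]) (hs₂₂ : 1 + e₂₂ ≡ -1 [ZMOD 2 * t]) :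
    β2 = -(2 * t * d) ∧ Int.gcd t d = 1 ∧ (2 * t * d) ∣ -(2 * d * b) ∧ (2 * t * d) ∣ -(2 * t * c) :=
  stmt_16_general t d a b c m2 β2 D ht hd hprim heven hβ2 hneg hD hrefl e₁₁ e₁₂ e₂₂ he₁₁ he₁₂ he₂₂
    hs₁₁ hs₁₂ hs₂₂
end

section
/- Let Λ = M ⊕ Zk ⊕ Zℓ with M even unimodular, k² = −2, ℓ² = −2 (the case d = t = 1). Then every primitive vector β ∈ Λ of square −4 satisfying β² | 2·div(β) has div(β) = 2 and discriminant class β* = k* + ℓ* in A_Λ ≅ Z/2Z × Z/2Z. In particular, writing β = am + bk + cℓ, the coefficients b and c are both odd and a is even. -/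
/-!
Since `β² = -4` divides `2 div(β)`, `div(β)` is even, and `div(β) ∣ a` forces `a` even. Then
`a² m²` is divisible by `8`, so `b² + c² ≡ 2 (mod 4)`, which makes `b` and `c` both odd.
Finally `div(β) = gcd(a, 2b, 2c)` divides `gcd(2a, 2b, 2c) = 2 gcd(a, b, c) = 2`, so `div(β) = 2`.
-/

theorem Int.odd_and_odd_of_sq_add_sq_emod_four {b c : ℤ} (h : (b ^ 2 + c ^ 2) % 4 = 2) :
    Odd b ∧ Odd c := by
  have four_dvd_sq {x : ℤ} (hx : Even x) : 4 ∣ x ^ 2 := by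
    simpa using pow_dvd_pow_of_dvd (even_iff_two_dvd.mp hx) 2
  rcases Int.even_or_odd b with hb | hb <;> rcases Int.even_or_odd c with hc | hc
  · have := four_dvd_sq hb; have := four_dvd_sq hc; omega
  · have := four_dvd_sq hb; have := Int.sq_mod_four_eq_one_of_odd hc; omega
  · have := Int.sq_mod_four_eq_one_of_odd hb; have := four_dvd_sq hc; omega
  · exact ⟨hb, hc⟩

theorem Int.gcd_gcd_mul_dvd_mul_gcd_gcd (a b c n : ℤ) :
    (Int.gcd (Int.gcd a (n * b)) (n * c) : ℤ) ∣ n * Int.gcd (Int.gcd a b) c := by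
  have hdvd : (Int.gcd (Int.gcd a (n * b)) (n * c) : ℤ) ∣
      Int.gcd (Int.gcd (n * a) (n * b)) (n * c) :=
    Int.dvd_coe_gcd (Int.dvd_coe_gcd
      (((Int.gcd_dvd_left _ _).trans (Int.gcd_dvd_left _ _)).mul_left n)
      ((Int.gcd_dvd_left _ _).trans (Int.gcd_dvd_right _ _))) (Int.gcd_dvd_right _ _)
  have hmul : Int.gcd (Int.gcd (n * a) (n * b)) (n * c) =
      n.natAbs * Int.gcd (Int.gcd a b) c := by
    simp only [Int.gcd_eq_natAbs, Int.natAbs_mul, Int.natAbs_natCast, Nat.gcd_mul_left]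
  rw [hmul, Nat.cast_mul, Int.natCast_natAbs] at hdvd
  exact hdvd.trans (mul_dvd_mul_right (abs_dvd_self n) _)

theorem stmt_17 (a b c m2 D : ℤ)
    (hprim : Int.gcd (Int.gcd a b) c = 1) (heven : 2 ∣ m2)
    (hβ2 : a ^ 2 * m2 - 2 * b ^ 2 - 2 * c ^ 2 = -4)
    (hD : D = Int.gcd (Int.gcd a (2 * b)) (2 * c))
    (hrefl : (-4 : ℤ) ∣ 2 * D) :
    D = 2 ∧ Odd b ∧ Odd c ∧ Even a := by
  have two_dvd_D : 2 ∣ D := by rw [Int.neg_dvd] at hrefl; omega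
  have D_dvd_a : D ∣ a := hD ▸ (Int.gcd_dvd_left _ _).trans (Int.gcd_dvd_left _ _)
  obtain ⟨a', rfl⟩ : 2 ∣ a := two_dvd_D.trans D_dvd_a
  obtain ⟨m', rfl⟩ := heven
  have hsum : b ^ 2 + c ^ 2 = 4 * (a' ^ 2 * m') + 2 :=
    mul_left_cancel₀ two_ne_zero (by linear_combination -hβ2)
  have hbc : (b ^ 2 + c ^ 2) % 4 = 2 := by omega
  obtain ⟨hb, hc⟩ := Int.odd_and_odd_of_sq_add_sq_emod_four hbc
  have D_dvd_two : D ∣ 2 := by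
    simpa [← hD, hprim] using Int.gcd_gcd_mul_dvd_mul_gcd_gcd (2 * a') b c 2
  have D_nonneg : 0 ≤ D := hD ▸ Int.natCast_nonneg _
  exact ⟨Int.dvd_antisymm D_nonneg zero_le_two D_dvd_two two_dvd_D, hb, hc, even_two_mul a'⟩
end

section
/- Let Λ be an even lattice of signature (2, n) with n ≥ 1, let f be an isometry of Λ, and suppose the eigenspace V of f⊗C for some eigenvalue λ has complex codimension 1 in Λ⊗C and V contains a vector x with x·x = 0 and x·x̄ > 0. Then λ = ±1, and if λ = 1 there exists a primitive vector β ∈ Λ with β² < 0 such that f acts as the identity on β^⊥ and f(β) = −β, i.e., f is the reflection r_β. -/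
/-!
If `λ² ≠ 1`, the `λ`-eigenspace of an isometry is totally isotropic, so for a nondegenerate form
it has at most half the dimension; a hyperplane in dimension `≥ 3` is too big, hence `λ = ±1`.

For `λ = 1`, the fixed space is a hyperplane, so `F - 1` has rank one and its image is spanned
by a primitive integral vector `β`. The image of `F - 1` is orthogonal to every fixed vector, in
particular to `Re x` and `Im x`, which span a positive definite plane. As the positive index is
`2`, the orthogonal complement of that plane is negative definite, so `β² < 0`. Then `Fβ = ±β`,
and `Fβ = β` would make `β` orthogonal to itself; so `Fβ = -β`, and `F` fixes `β^⊥` because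
`(F - 1)w ∈ ℤβ` pairs trivially with `β` when `w ⊥ β`.
-/

open Module Matrix LinearMap Complex
open LinearMap (BilinForm)

namespace LinearMap.IsOrthogonal

variable {K V : Type*} [Field K] [AddCommGroup V] [Module K V]
  {B : BilinForm K V} {f : V →ₗ[K] V}

lemma eigenspace_le_orthogonal (hf : B.IsOrthogonal f) {μ : K} (hμ : μ * μ ≠ 1) :
    End.eigenspace f μ ≤ B.orthogonal (End.eigenspace f μ) := by
  intro e he
  rw [BilinForm.mem_orthogonal_iff]
  intro e' he'
  have h := hf e' e
  rw [End.mem_eigenspace_iff.mp he, End.mem_eigenspace_iff.mp he'] at h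
  simp only [map_smul, LinearMap.smul_apply, smul_eq_mul] at h
  have : (μ * μ - 1) * B e' e = 0 := by linear_combination h
  exact (mul_eq_zero.mp this).resolve_left (sub_ne_zero.mpr hμ)

lemma two_mul_finrank_eigenspace_le [FiniteDimensional K V] (hB : B.Nondegenerate)
    (hf : B.IsOrthogonal f) {μ : K} (hμ : μ * μ ≠ 1) :
    2 * finrank K (End.eigenspace f μ) ≤ finrank K V := by
  have hle := Submodule.finrank_mono (hf.eigenspace_le_orthogonal hμ)
  rw [BilinForm.finrank_orthogonal hB] at hle
  have := Submodule.finrank_le (End.eigenspace f μ)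
  omega

lemma eq_one_or_eq_neg_one_of_finrank_eigenspace [FiniteDimensional K V] (hB : B.Nondegenerate)
    (hf : B.IsOrthogonal f) {μ : K} (hV : 3 ≤ finrank K V)
    (hμ : finrank K (End.eigenspace f μ) = finrank K V - 1) : μ = 1 ∨ μ = -1 := by
  refine mul_self_eq_one_iff.mp (by_contra fun hμ1 => ?_)
  have := hf.two_mul_finrank_eigenspace_le hB hμ1
  omega

lemma apply_eq_zero_of_mem_range_sub_one (hf : B.IsOrthogonal f) {y z : V}
    (hy : y ∈ range (f - 1)) (hz : f z = z) : B y z = 0 := by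
  obtain ⟨w, rfl⟩ := hy
  have hfw : B (f w) z = B w z := by rw [← hf w z, hz]
  simp [hfw]

lemma apply_eq_neg_of_range_sub_one_eq_span (hf : B.IsOrthogonal f) {β : V}
    (hrange : range (f - 1) = K ∙ β) (hβ : B β β ≠ 0) : f β = -β := by
  obtain ⟨t, ht⟩ := Submodule.mem_span_singleton.mp
    (hrange ▸ LinearMap.mem_range_self (f - 1) β)
  have hfβ : f β = (1 + t) • β := by
    rw [add_smul, one_smul, ht]
    simp
  have hsq : (1 + t) * (1 + t) = 1 := by
    have h := hf β β
    simp only [hfβ, map_smul, LinearMap.smul_apply, smul_eq_mul] at h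
    have : ((1 + t) * (1 + t) - 1) * B β β = 0 := by linear_combination h
    exact sub_eq_zero.mp ((mul_eq_zero.mp this).resolve_right hβ)
  rcases mul_self_eq_one_iff.mp hsq with h | h
  · rw [h, one_smul] at hfβ
    exact absurd (hf.apply_eq_zero_of_mem_range_sub_one
      (hrange ▸ Submodule.mem_span_singleton_self β) hfβ) hβ
  · rw [hfβ, h, neg_one_smul]

lemma apply_eq_self_of_orthogonal (hf : B.IsOrthogonal f) {β w : V}
    (hrange : range (f - 1) ≤ K ∙ β) (hβ : B β β ≠ 0) (hfβ : f β = -β) (hw : B β w = 0) :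
    f w = w := by
  obtain ⟨s, hs⟩ := Submodule.mem_span_singleton.mp (hrange (LinearMap.mem_range_self (f - 1) w))
  rw [LinearMap.sub_apply, End.one_apply] at hs
  have hβfw : B β (f w) = 0 := by
    simpa [hfβ, hw] using hf β w
  have hs0 : s * B β β = 0 := by
    simpa [hβfw, hw] using congrArg (B β) hs
  rw [← sub_eq_zero, ← hs, (mul_eq_zero.mp hs0).resolve_right hβ, zero_smul]

end LinearMap.IsOrthogonal

lemma Module.End.finrank_range_sub_one_eq_one {K V : Type*} [Field K] [AddCommGroup V]
    [Module K V] [FiniteDimensional K V] {f : End K V} (hV : 1 ≤ finrank K V)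
    (hf : finrank K (End.eigenspace f 1) = finrank K V - 1) : finrank K (range (f - 1)) = 1 := by
  have := finrank_range_add_finrank_ker (f - 1)
  rw [← one_smul K (1 : End K V), ← End.eigenspace_def, hf, one_smul] at this
  omega

namespace LinearMap.BilinForm

lemma apply_sum_smul_self_of_iIsOrtho {R M ι : Type*} [CommSemiring R] [AddCommMonoid M]
    [Module R M] [Fintype ι] {B : BilinForm R M} {b : ι → M} (hb : B.iIsOrtho b) (c : ι → R) :
    B (∑ i, c i • b i) (∑ i, c i • b i) = ∑ i, c i * c i * B (b i) (b i) := by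
  simp only [map_sum, map_smul, LinearMap.sum_apply, LinearMap.smul_apply, smul_eq_mul,
    Finset.mul_sum]
  refine Finset.sum_congr rfl fun i _ => ?_
  rw [Finset.sum_eq_single i (fun j _ hji => by rw [iIsOrtho_def.mp hb j i hji]; ring)
    (by simp)]
  ring

variable {V : Type*} [AddCommGroup V] [Module ℝ V] {B : BilinForm ℝ V}

lemma card_le_of_iIsOrtho {k : ℕ}
    (hidx : ∀ W : Submodule ℝ V, (∀ v ∈ W, v ≠ 0 → 0 < B v v) → finrank ℝ W ≤ k)
    {ι : Type*} [Fintype ι] {b : ι → V} (hb : B.iIsOrtho b) (hpos : ∀ i, 0 < B (b i) (b i)) :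
    Fintype.card ι ≤ k := by
  rw [← finrank_span_eq_card (linearIndependent_of_iIsOrtho hb fun i => (hpos i).ne')]
  refine hidx _ fun y hy hy0 => ?_
  obtain ⟨c, rfl⟩ := (Submodule.mem_span_range_iff_exists_fun ℝ).mp hy
  obtain ⟨i, hi⟩ : ∃ i, c i ≠ 0 := by
    by_contra! h
    simp [h] at hy0
  rw [apply_sum_smul_self_of_iIsOrtho hb]
  exact Finset.sum_pos' (fun j _ => mul_nonneg (mul_self_nonneg _) (hpos j).le)
    ⟨i, Finset.mem_univ i, mul_pos (mul_self_pos.mpr hi) (hpos i)⟩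

section PositivePlane

variable (hB : B.IsSymm)
  (hidx : ∀ W : Submodule ℝ V, (∀ v ∈ W, v ≠ 0 → 0 < B v v) → finrank ℝ W ≤ 2)
  {u v : V} (hu : 0 < B u u) (hv : 0 < B v v) (huv : B u v = 0)
include hB hidx hu hv huv

lemma apply_self_nonpos_of_orthogonal {w : V} (hwu : B w u = 0) (hwv : B w v = 0) :
    B w w ≤ 0 := by
  by_contra! hw
  have hb : B.iIsOrtho ![u, v, w] := by
    rw [iIsOrtho_def]
    intro i j hij
    fin_cases i <;> fin_cases j <;> simp_all [hB.eq v u, hB.eq u w, hB.eq v w]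
  have := card_le_of_iIsOrtho hidx hb (by intro i; fin_cases i <;> assumption)
  simp at this

lemma apply_self_neg_of_orthogonal (hnd : B.Nondegenerate) {β : V} (hβ : β ≠ 0)
    (hβu : B β u = 0) (hβv : B β v = 0) : B β β < 0 := by
  refine (apply_self_nonpos_of_orthogonal hB hidx hu hv huv hβu hβv).lt_of_ne fun hββ => ?_
  obtain ⟨w, hw⟩ : ∃ w, B β w ≠ 0 := by
    by_contra! h
    exact hβ (hnd.1 β h)
  -- `γ` is `w` minus its orthogonal projection to the plane `⟨u, v⟩`
  set γ := w - (B u w / B u u) • u - (B v w / B v v) • v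
  have hγu : B γ u = 0 := by
    simp only [γ, map_sub, map_smul, LinearMap.sub_apply, LinearMap.smul_apply, smul_eq_mul,
      hB.eq w u, hB.eq v u, huv]
    field_simp
    ring
  have hγv : B γ v = 0 := by
    simp only [γ, map_sub, map_smul, LinearMap.sub_apply, LinearMap.smul_apply, smul_eq_mul,
      hB.eq w v, huv]
    field_simp
    ring
  have hβγ : B β γ = B β w := by
    simp [γ, hβu, hβv]
  set s := (1 - B γ γ) / (2 * B β w)
  have hval : B (s • β + γ) (s • β + γ) = 1 := by
    simp only [s, map_add, map_smul, LinearMap.add_apply, LinearMap.smul_apply, smul_eq_mul, hββ,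
      hβγ, hB.eq γ β]
    field_simp
    ring
  have := apply_self_nonpos_of_orthogonal hB hidx hu hv huv (w := s • β + γ)
    (by simp [hβu, hγu]) (by simp [hβv, hγv])
  linarith

lemma _root_.LinearMap.IsOrthogonal.reflection_of_range_sub_one_eq_span (hnd : B.Nondegenerate)
    {f : V →ₗ[ℝ] V} (hf : B.IsOrthogonal f) (hfu : f u = u) (hfv : f v = v) {β : V}
    (hβ : β ≠ 0) (hrange : range (f - 1) = ℝ ∙ β) :
    B β β < 0 ∧ (∀ w, B β w = 0 → f w = w) ∧ f β = -β := by
  have hβmem : β ∈ range (f - 1) := hrange ▸ Submodule.mem_span_singleton_self β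
  have hββ : B β β < 0 := apply_self_neg_of_orthogonal hB hidx hu hv huv hnd hβ
    (hf.apply_eq_zero_of_mem_range_sub_one hβmem hfu)
    (hf.apply_eq_zero_of_mem_range_sub_one hβmem hfv)
  have hfβ := hf.apply_eq_neg_of_range_sub_one_eq_span hrange hββ.ne
  exact ⟨hββ, fun w hw => hf.apply_eq_self_of_orthogonal hrange.le hββ.ne hfβ hw, hfβ⟩

end PositivePlane

end LinearMap.BilinForm

namespace Complex

lemma ofReal_comp_mulVec {m n : Type*} [Fintype n] (M : Matrix m n ℝ) (v : n → ℝ) :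
    ofReal ∘ (M *ᵥ v) = M.map ofReal *ᵥ (ofReal ∘ v) :=
  funext (RingHom.map_mulVec ofRealHom M v)

lemma re_comp_mulVec {m n : Type*} [Fintype n] (M : Matrix m n ℝ) (x : n → ℂ) :
    re ∘ (M.map ofReal *ᵥ x) = M *ᵥ (re ∘ x) := by
  ext i
  simp [mulVec, dotProduct, re_sum]

lemma im_comp_mulVec {m n : Type*} [Fintype n] (M : Matrix m n ℝ) (x : n → ℂ) :
    im ∘ (M.map ofReal *ᵥ x) = M *ᵥ (im ∘ x) := by
  ext i
  simp [mulVec, dotProduct, im_sum]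

lemma re_dotProduct {n : Type*} [Fintype n] (x y : n → ℂ) :
    (x ⬝ᵥ y).re = (re ∘ x) ⬝ᵥ (re ∘ y) - (im ∘ x) ⬝ᵥ (im ∘ y) := by
  simp [dotProduct, re_sum, Finset.sum_sub_distrib]

lemma im_dotProduct {n : Type*} [Fintype n] (x y : n → ℂ) :
    (x ⬝ᵥ y).im = (re ∘ x) ⬝ᵥ (im ∘ y) + (im ∘ x) ⬝ᵥ (re ∘ y) := by
  simp [dotProduct, im_sum, Finset.sum_add_distrib]

end Complex

lemma range_toLin'_eq_span_of_finrank_range_map_ofReal {m n : Type*} [Fintype n] [DecidableEq n]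
    (M : Matrix m n ℝ) {b : m → ℝ} (hb : b ∈ range (toLin' M)) (hb0 : b ≠ 0)
    (h : finrank ℂ (range (toLin' (M.map ofReal))) = 1) : range (toLin' M) = ℝ ∙ b := by
  have mem_rangeC (w : n → ℝ) : ofReal ∘ (M *ᵥ w) ∈ range (toLin' (M.map ofReal)) :=
    ⟨ofReal ∘ w, by rw [toLin'_apply, ofReal_comp_mulVec]⟩
  obtain ⟨wb, rfl⟩ := hb
  rw [toLin'_apply] at hb0 ⊢
  have hb0C : ofReal ∘ (M *ᵥ wb) ≠ 0 := fun h0 =>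
    hb0 (ofReal_injective.comp_left (h0.trans (by ext; simp)))
  have hspanC : range (toLin' (M.map ofReal)) = ℂ ∙ (ofReal ∘ (M *ᵥ wb)) :=
    (Submodule.eq_of_le_of_finrank_le (Submodule.span_singleton_le_iff_mem _ _ |>.mpr
      (mem_rangeC wb)) (by rw [h, finrank_span_singleton hb0C])).symm
  refine le_antisymm ?_ ((Submodule.span_singleton_le_iff_mem _ _).mpr ⟨wb, toLin'_apply M wb⟩)
  rintro _ ⟨w, rfl⟩
  obtain ⟨t, ht⟩ := Submodule.mem_span_singleton.mp (hspanC ▸ mem_rangeC w)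
  refine Submodule.mem_span_singleton.mpr ⟨t.re, funext fun i => ?_⟩
  simpa [toLin'_apply] using congrArg re (congrFun ht i)

variable {ι : Type*} [Fintype ι]

lemma intCast_comp_mulVec {R : Type*} [CommRing R] (M : Matrix ι ι ℤ) (v : ι → ℤ) :
    Int.cast ∘ (M *ᵥ v) = M.map (Int.cast : ℤ → R) *ᵥ (Int.cast ∘ v) :=
  funext (RingHom.map_mulVec (Int.castRingHom R) M v)

lemma exists_primitive_smul_eq {c : ι → ℤ} (hc : c ≠ 0) :
    ∃ g : ℤ, g ≠ 0 ∧ ∃ β : ι → ℤ, c = g • β ∧ ∀ (m : ℤ) (v : ι → ℤ), β = m • v → IsUnit m := by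
  obtain ⟨i, hi⟩ := Function.ne_iff.mp hc
  obtain ⟨β, hcβ, hβ⟩ := Finset.extract_gcd c ⟨i, Finset.mem_univ i⟩
  refine ⟨Finset.univ.gcd c, fun h0 => hi ?_, β, funext fun j => hcβ j (Finset.mem_univ j),
    fun m v hβv => isUnit_of_dvd_one ?_⟩
  · exact Finset.gcd_eq_zero_iff.mp h0 i (Finset.mem_univ i)
  · rw [← hβ]
    exact Finset.dvd_gcd fun j _ => ⟨v j, by rw [hβv]; rfl⟩

variable [DecidableEq ι]

lemma pos_re_im_of_isotropic {G : Matrix ι ι ℝ} (hG : G.IsSymm) {x : ι → ℂ} {ρ : ℝ}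
    (hρ : 0 < ρ) (hxx : toBilin' (G.map ofReal) x x = 0)
    (hxρ : toBilin' (G.map ofReal) x (star x) = ρ) :
    0 < toBilin' G (re ∘ x) (re ∘ x) ∧ 0 < toBilin' G (im ∘ x) (im ∘ x) ∧
      toBilin' G (re ∘ x) (im ∘ x) = 0 := by
  have hsymm := (isSymm_toBilin'_iff_isSymm.mpr hG).eq (im ∘ x) (re ∘ x)
  have hre : re ∘ star x = re ∘ x := by ext; simp
  have him : im ∘ star x = -(im ∘ x) := by ext; simp
  have h1 := congrArg re hxx
  have h2 := congrArg im hxx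
  have h3 := congrArg re hxρ
  simp only [toBilin'_apply', re_dotProduct, im_dotProduct, re_comp_mulVec, im_comp_mulVec, hre,
    him, mulVec_neg, dotProduct_neg, zero_re, zero_im, ofReal_re] at h1 h2 h3 hsymm ⊢
  exact ⟨by linarith, by linarith, by linarith⟩

lemma isOrthogonal_toBilin'_toLin' {R : Type*} [CommRing R] {G F : Matrix ι ι R}
    (h : Fᵀ * G * F = G) : (toBilin' G).IsOrthogonal (toLin' F) := by
  intro v w
  rw [← BilinForm.comp_apply, toBilin'_comp, h]

lemma isOrthogonal_toBilin'_intCast {R : Type*} [CommRing R] {G F : Matrix ι ι ℤ}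
    (h : Fᵀ * G * F = G) :
    (toBilin' (G.map (Int.cast : ℤ → R))).IsOrthogonal (toLin' (F.map Int.cast)) := by
  refine isOrthogonal_toBilin'_toLin' ?_
  have := congrArg (Int.castRingHom R).mapMatrix h
  rw [map_mul, map_mul] at this
  rw [← transpose_map]
  exact this

lemma nondegenerate_toBilin'_intCast {K : Type*} [Field K] [CharZero K] {G : Matrix ι ι ℤ}
    (h : G.det ≠ 0) : (toBilin' (G.map (Int.cast : ℤ → K))).Nondegenerate := by
  rw [BilinForm.nondegenerate_toBilin'_iff_det_ne_zero,
    show G.map (Int.cast : ℤ → K) = (Int.castRingHom K).mapMatrix G from rfl,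
    ← RingHom.map_det]
  simpa using h

lemma toLin'_map_intCast_sub_one {R : Type*} [CommRing R] (F : Matrix ι ι ℤ) :
    toLin' ((F - 1).map (Int.cast : ℤ → R)) = toLin' (F.map Int.cast) - 1 := by
  rw [Matrix.map_sub _ Int.cast_sub, Matrix.map_one _ Int.cast_zero Int.cast_one, map_sub,
    toLin'_one]
  rfl

lemma intCast_toBilin' {R : Type*} [CommRing R] (G : Matrix ι ι ℤ) (v w : ι → ℤ) :
    ((toBilin' G v w : ℤ) : R) = toBilin' (G.map Int.cast) (Int.cast ∘ v) (Int.cast ∘ w) := by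
  rw [toBilin'_apply', toBilin'_apply', ← intCast_comp_mulVec]
  exact RingHom.map_dotProduct (Int.castRingHom R) v (G *ᵥ w)

lemma exists_primitive_range_eq_span (D : Matrix ι ι ℤ)
    (hD : finrank ℂ (range (toLin' (D.map (Int.cast : ℤ → ℂ)))) = 1) :
    ∃ β : ι → ℤ, (∀ (m : ℤ) (v : ι → ℤ), β = m • v → IsUnit m) ∧ (Int.cast ∘ β : ι → ℝ) ≠ 0 ∧
      range (toLin' (D.map (Int.cast : ℤ → ℝ))) = ℝ ∙ (Int.cast ∘ β) := by
  obtain ⟨j, hj⟩ : ∃ j, D *ᵥ Pi.single j 1 ≠ 0 := by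
    by_contra! h
    have hD0 : D = 0 := Matrix.ext fun i j => by simpa using congrFun (h j) i
    rw [hD0, Matrix.map_zero _ Int.cast_zero, map_zero, range_zero, finrank_bot] at hD
    exact zero_ne_one hD
  obtain ⟨g, hg, β, hcβ, hprim⟩ := exists_primitive_smul_eq hj
  have hβ0 : (Int.cast ∘ β : ι → ℝ) ≠ 0 := by
    refine fun h0 => not_isUnit_zero (hprim 0 β ?_)
    rw [zero_smul]
    exact Int.cast_injective.comp_left (h0.trans (by ext; simp))
  have hmem : (Int.cast ∘ β : ι → ℝ) ∈ range (toLin' (D.map Int.cast)) := by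
    refine ⟨(g : ℝ)⁻¹ • (Int.cast ∘ Pi.single j 1), ?_⟩
    rw [map_smul, toLin'_apply, ← intCast_comp_mulVec, hcβ]
    ext i
    simp [hg]
  refine ⟨β, hprim, hβ0, range_toLin'_eq_span_of_finrank_range_map_ofReal _ hmem hβ0 ?_⟩
  rwa [Matrix.map_map, show ofReal ∘ (Int.cast : ℤ → ℝ) = Int.cast from funext ofReal_intCast]

lemma reflection_of_map_intCast {G F : Matrix ι ι ℤ} {β : ι → ℤ}
    (h : toBilin' (G.map (Int.cast : ℤ → ℝ)) (Int.cast ∘ β) (Int.cast ∘ β) < 0 ∧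
      (∀ w, toBilin' (G.map (Int.cast : ℤ → ℝ)) (Int.cast ∘ β) w = 0 →
        toLin' (F.map (Int.cast : ℤ → ℝ)) w = w) ∧
      toLin' (F.map (Int.cast : ℤ → ℝ)) (Int.cast ∘ β) = -(Int.cast ∘ β)) :
    toBilin' G β β < 0 ∧ (∀ v, toBilin' G β v = 0 → F *ᵥ v = v) ∧ F *ᵥ β = -β := by
  obtain ⟨hββ, hfix, hfβ⟩ := h
  have hinj := (Int.cast_injective (α := ℝ)).comp_left (α := ι)
  refine ⟨by rw [← intCast_toBilin'] at hββ; exact_mod_cast hββ, fun v hv => hinj ?_, hinj ?_⟩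
  · show Int.cast ∘ (F *ᵥ v) = Int.cast ∘ v
    rw [intCast_comp_mulVec, ← toLin'_apply]
    exact hfix _ (by rw [← intCast_toBilin', hv, Int.cast_zero])
  · show Int.cast ∘ (F *ᵥ β) = Int.cast ∘ (-β)
    rw [intCast_comp_mulVec, ← toLin'_apply, hfβ]
    ext
    simp

theorem stmt_18_general (n : ℕ) (hn : 3 ≤ n)
    (G : Matrix (Fin n) (Fin n) ℤ) (hGsymm : G.IsSymm)
    (hGnd : G.det ≠ 0)
    (hsig_le : ∀ W : Submodule ℝ (Fin n → ℝ),
      (∀ v ∈ W, v ≠ 0 → 0 < Matrix.toBilin' (G.map (Int.cast : ℤ → ℝ)) v v) →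
        Module.finrank ℝ W ≤ 2)
    (F : Matrix (Fin n) (Fin n) ℤ) (hFiso : F.transpose * G * F = G)
    (lam : ℂ)
    (E : Submodule ℂ (Fin n → ℂ))
    (hE : E = Module.End.eigenspace
      (Matrix.toLin' (F.map (Int.cast : ℤ → ℂ))) lam)
    (hcodim : Module.finrank ℂ E = n - 1)
    (x : Fin n → ℂ) (hxE : x ∈ E)
    (hxx : Matrix.toBilin' (G.map (Int.cast : ℤ → ℂ)) x x = 0)
    (hxxbar : ∃ ρ : ℝ, 0 < ρ ∧
      Matrix.toBilin' (G.map (Int.cast : ℤ → ℂ)) x (star x) = (ρ : ℂ)) :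
    (lam = 1 ∨ lam = -1) ∧
      (lam = 1 → ∃ β : Fin n → ℤ,
        (∀ (m : ℤ) (v : Fin n → ℤ), β = m • v → IsUnit m) ∧
        Matrix.toBilin' G β β < 0 ∧
        (∀ v : Fin n → ℤ, Matrix.toBilin' G β v = 0 → F.mulVec v = v) ∧
        F.mulVec β = -β) := by
  have hmapC (M : Matrix (Fin n) (Fin n) ℤ) :
      M.map (Int.cast : ℤ → ℂ) = (M.map (Int.cast : ℤ → ℝ)).map ofReal := by
    ext
    simp
  have hcodim' : finrank ℂ (End.eigenspace (toLin' (F.map (Int.cast : ℤ → ℂ))) lam) =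
      finrank ℂ (Fin n → ℂ) - 1 := by
    rw [← hE, hcodim, finrank_fin_fun]
  have hlam : lam = 1 ∨ lam = -1 :=
    (isOrthogonal_toBilin'_intCast hFiso).eq_one_or_eq_neg_one_of_finrank_eigenspace
      (nondegenerate_toBilin'_intCast hGnd) (by simpa using hn) hcodim'
  refine ⟨hlam, ?_⟩
  rintro rfl
  obtain ⟨ρ, hρ, hxρ⟩ := hxxbar
  obtain ⟨hu, hv, huv⟩ :=
    pos_re_im_of_isotropic (hGsymm.map _) hρ (hmapC G ▸ hxx) (hmapC G ▸ hxρ)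
  have hxfix : (F.map (Int.cast : ℤ → ℝ)).map ofReal *ᵥ x = x := by
    simpa [hE, ← hmapC] using hxE
  have hrank := End.finrank_range_sub_one_eq_one (by simp; omega) hcodim'
  rw [← toLin'_map_intCast_sub_one] at hrank
  obtain ⟨β, hprim, hβ0, hrange⟩ := exists_primitive_range_eq_span (F - 1) hrank
  rw [toLin'_map_intCast_sub_one] at hrange
  refine ⟨β, hprim, reflection_of_map_intCast ?_⟩
  refine (isOrthogonal_toBilin'_intCast hFiso).reflection_of_range_sub_one_eq_span
    (isSymm_toBilin'_iff_isSymm.mpr (hGsymm.map _)) hsig_le hu hv huv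
    (nondegenerate_toBilin'_intCast hGnd) ?_ ?_ hβ0 hrange
  · rw [toLin'_apply, ← re_comp_mulVec, hxfix]
  · rw [toLin'_apply, ← im_comp_mulVec, hxfix]

theorem stmt_18 (n : ℕ) (hn : 3 ≤ n)
    (G : Matrix (Fin n) (Fin n) ℤ) (hGsymm : G.IsSymm) (hGeven : ∀ i, 2 ∣ G i i)
    (hGnd : G.det ≠ 0)
    (hsig_le : ∀ W : Submodule ℝ (Fin n → ℝ),
      (∀ v ∈ W, v ≠ 0 → 0 < Matrix.toBilin' (G.map (Int.cast : ℤ → ℝ)) v v) →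
        Module.finrank ℝ W ≤ 2)
    (hsig_ex : ∃ W : Submodule ℝ (Fin n → ℝ),
      (∀ v ∈ W, v ≠ 0 → 0 < Matrix.toBilin' (G.map (Int.cast : ℤ → ℝ)) v v) ∧
        Module.finrank ℝ W = 2)
    (F : Matrix (Fin n) (Fin n) ℤ) (hFiso : F.transpose * G * F = G)
    (lam : ℂ)
    (E : Submodule ℂ (Fin n → ℂ))
    (hE : E = Module.End.eigenspace
      (Matrix.toLin' (F.map (Int.cast : ℤ → ℂ))) lam)
    (hcodim : Module.finrank ℂ E = n - 1)
    (x : Fin n → ℂ) (hxE : x ∈ E)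
    (hxx : Matrix.toBilin' (G.map (Int.cast : ℤ → ℂ)) x x = 0)
    (hxxbar : ∃ ρ : ℝ, 0 < ρ ∧
      Matrix.toBilin' (G.map (Int.cast : ℤ → ℂ)) x (star x) = (ρ : ℂ)) :
    (lam = 1 ∨ lam = -1) ∧
      (lam = 1 → ∃ β : Fin n → ℤ,
        (∀ (m : ℤ) (v : Fin n → ℤ), β = m • v → IsUnit m) ∧
        Matrix.toBilin' G β β < 0 ∧
        (∀ v : Fin n → ℤ, Matrix.toBilin' G β v = 0 → F.mulVec v = v) ∧
        F.mulVec β = -β) :=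
  stmt_18_general n hn G hGsymm hGnd hsig_le F hFiso lam E hE hcodim x hxE hxx hxxbar
end
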